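/- arXiv:1911.01539 — 8 statements merged into one kernel-verified Lean document; each statement's English description precedes it below -/
import Mathlib

section
/- Let f : [0,T] → ℂⁿ be continuous and define g(s) := ∫₀ᵀ Λ(s−t) f(t) dt for s ∈ [0,T]. Then g is twice continuously differentiable on [0,T], satisfies the second-order ODE g''(s) + (℧Aᵀ℧⁻¹ − A)g'(s) − ℧Aᵀ℧⁻¹A g(s) = −℧ f(s) for all s ∈ [0,T], and satisfies the boundary conditions g'(0) = −ΘAᵀΘ⁻¹ g(0) and g'(T) = A g(T). -/
/-!
With `D := ΘAᵀΘ⁻¹` we have `Θ e^{rAᵀ} = e^{rD} Θ`, so splitting the integral at `t = s` gives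
`g = u - V` on `[0,T]`, where `u(s) = ∫₀ˢ e^{(s-t)A} Θ f(t) dt` and
`V(s) = ∫_T^s e^{-(s-t)D} Θ f(t) dt`.
Both are variation-of-constants integrals: `u' = Au + Θf` and `V' = -DV + Θf`. Hence
`g' = Au + DV` and `g'' = A²u - D²V + (A + D)Θf`, and `u(0) = 0`, `V(T) = 0` give the boundary
conditions. The ODE reduces to `(A + D)Θ = -℧` and `(A + D)D = ℧Aᵀ℧⁻¹(A + D)`, both consequences of
`A + D = -℧Θ⁻¹`.
-/

open MeasureTheory Matrix Set NormedSpace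

section VariationOfConstants

variable {E : Type*} [NormedAddCommGroup E] [NormedSpace ℝ E] [CompleteSpace E]

theorem continuous_exp_smul_apply (c : E →L[ℝ] E) {w : ℝ → E} (hw : Continuous w) (s : ℝ) :
    Continuous fun t ↦ exp ((s - t) • c) (w t) := by
  -- `E →L[ℝ] E` carries no `NormedAlgebra ℚ` instance, which the API of `exp` is stated for.
  let : NormedAlgebra ℚ (E →L[ℝ] E) := NormedAlgebra.restrictScalars ℚ ℝ _
  fun_prop

theorem hasDerivAt_integral_exp_smul_apply (c : E →L[ℝ] E) {w : ℝ → E} (hw : Continuous w)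
    (a s : ℝ) :
    HasDerivAt (fun s ↦ ∫ t in a..s, exp ((s - t) • c) (w t))
      (c (∫ t in a..s, exp ((s - t) • c) (w t)) + w s) s := by
  let : NormedAlgebra ℚ (E →L[ℝ] E) := NormedAlgebra.restrictScalars ℚ ℝ _
  have hexp_sub : ∀ s t : ℝ, ∀ x : E, exp ((s - t) • c) x = exp (s • c) (exp ((-t) • c) x) :=
    fun s t x ↦ by
      rw [sub_eq_add_neg, add_smul,
        NormedSpace.exp_add_of_commute (((Commute.refl c).smul_left s).smul_right (-t))]
      rfl
  have hint : Continuous fun t ↦ exp ((-t) • c) (w t) := by fun_prop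
  have hfactor : ∀ s, ∫ t in a..s, exp ((s - t) • c) (w t) =
      exp (s • c) (∫ t in a..s, exp ((-t) • c) (w t)) := fun s ↦ by
    simp_rw [hexp_sub s]
    exact (exp (s • c)).intervalIntegral_comp_comm (hint.intervalIntegrable a s)
  simp_rw [hfactor]
  convert (hasDerivAt_exp_smul_const' c s).clm_apply
    (hint.integral_hasStrictDerivAt a s).hasDerivAt using 1
  rw [← hexp_sub, sub_self, zero_smul, NormedSpace.exp_zero]
  rfl

end VariationOfConstants

-- The left side is `y'' + (c - a) y' - c a y` for `y = u - v`, `u' = a u + y₀`, `v' = -d v + y₀`.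
theorem SemiconjBy.second_order_apply_eq {E : Type*} [NormedAddCommGroup E] [NormedSpace ℝ E]
    {a d c : E →L[ℝ] E} (hd : SemiconjBy (a + d) d c) (u v y₀ : E) :
    a (a u + y₀) + d ((-d) v + y₀) + (c - a) (a u + d v) - (c * a) (u - v) = (a + d) y₀ := by
  have hdv := congr($hd v)
  simp only [_root_.sub_apply, _root_.add_apply, _root_.neg_apply, mul_apply_eq_comp, map_add,
    map_sub, map_neg] at hdv ⊢
  linear_combination (norm := module) (-1 : ℝ) • hdv

theorem ContinuousOn.exists_continuous_eqOn_Icc {α X : Type*} [LinearOrder α]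
    [TopologicalSpace α] [OrderTopology α] [TopologicalSpace X] {f : α → X} {a b : α}
    (hab : a ≤ b) (hf : ContinuousOn f (Icc a b)) :
    ∃ F : α → X, Continuous F ∧ EqOn F f (Icc a b) :=
  ⟨IccExtend hab ((Icc a b).domRestrict f),
    (continuousOn_iff_continuous_domRestrict.1 hf).Icc_extend',
    fun _ ht ↦ by simp only [IccExtend_of_mem _ _ ht, domRestrict_apply]⟩

theorem intervalIntegral.integral_eq_add_of_eqOn_Icc {E : Type*} [NormedAddCommGroup E]
    [NormedSpace ℝ E] {F G H : ℝ → E} {a b s : ℝ} (hs : s ∈ Icc a b) (hG : Continuous G)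
    (hH : Continuous H) (hFG : EqOn F G (Icc a s)) (hFH : EqOn F H (Icc s b)) :
    ∫ t in a..b, F t = (∫ t in a..s, G t) + ∫ t in s..b, H t := by
  have hFG' : EqOn F G (uIcc a s) := by rwa [uIcc_of_le hs.1]
  have hFH' : EqOn F H (uIcc s b) := by rwa [uIcc_of_le hs.2]
  rw [← integral_add_adjacent_intervals
      ((hG.intervalIntegrable a s).congr (hFG'.symm.mono Ioc_subset_Icc_self))
      ((hH.intervalIntegrable s b).congr (hFH'.symm.mono Ioc_subset_Icc_self)),
    integral_congr hFG', integral_congr hFH']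

namespace Matrix

variable {ι : Type*} [Fintype ι] [DecidableEq ι]

noncomputable def ofRealMulVecCLM : Matrix ι ι ℝ →ₐ[ℝ] (ι → ℂ) →L[ℝ] (ι → ℂ) where
  toFun M := (((M.map Complex.ofReal).mulVecLin).restrictScalars ℝ).toContinuousLinearMap
  map_one' := by ext; simp
  map_mul' M N := by
    ext x : 1
    change (M * N).map Complex.ofReal *ᵥ x = M.map Complex.ofReal *ᵥ N.map Complex.ofReal *ᵥ x
    rw [mulVec_mulVec]
    exact congrArg (· *ᵥ x) (Matrix.map_mul (f := Complex.ofRealHom))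
  map_zero' := by ext; simp
  map_add' M N := by ext; simp [Matrix.map_add]
  commutes' r := by ext x : 1; simp [Algebra.algebraMap_eq_smul_one, Matrix.map_smul]

@[simp]
theorem ofRealMulVecCLM_apply (M : Matrix ι ι ℝ) (x : ι → ℂ) :
    ofRealMulVecCLM M x = M.map Complex.ofReal *ᵥ x := rfl

theorem continuous_ofRealMulVecCLM : Continuous (ofRealMulVecCLM : Matrix ι ι ℝ → _) :=
  (ofRealMulVecCLM : Matrix ι ι ℝ →ₐ[ℝ] _).toLinearMap.continuous_of_finiteDimensional

open scoped Matrix.Norms.Operator in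
theorem ofRealMulVecCLM_exp (M : Matrix ι ι ℝ) :
    ofRealMulVecCLM (exp M) = exp (ofRealMulVecCLM M) :=
  NormedSpace.map_exp _ continuous_ofRealMulVecCLM M

theorem mul_exp_eq_exp_conj_mul {𝔸 : Type*} [NormedCommRing 𝔸] [NormedAlgebra ℚ 𝔸]
    [CompleteSpace 𝔸] {U : Matrix ι ι 𝔸} (hU : IsUnit U) (B : Matrix ι ι 𝔸) :
    U * exp B = exp (U * B * U⁻¹) * U := by
  rw [exp_conj U B hU, Matrix.mul_assoc, nonsing_inv_mul U ((isUnit_iff_isUnit_det U).1 hU),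
    Matrix.mul_one]

section Realizability

variable {R : Type*} [CommRing R] {A Θ ℧ : Matrix ι ι R}

theorem add_conj_transpose_mul_eq_neg (hΘ : IsUnit Θ) (h℧ : ℧ = -(A * Θ + Θ * Aᵀ)) :
    (A + Θ * Aᵀ * Θ⁻¹) * Θ = -℧ := by
  rw [h℧, neg_neg, add_mul, Matrix.mul_assoc (Θ * Aᵀ),
    nonsing_inv_mul Θ ((isUnit_iff_isUnit_det Θ).1 hΘ), Matrix.mul_one]

theorem semiconjBy_add_conj_transpose (hΘ : IsUnit Θ) (h℧ : ℧ = -(A * Θ + Θ * Aᵀ))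
    (h℧inv : IsUnit ℧) :
    SemiconjBy (A + Θ * Aᵀ * Θ⁻¹) (Θ * Aᵀ * Θ⁻¹) (℧ * Aᵀ * ℧⁻¹) := by
  have hΘdet := (isUnit_iff_isUnit_det Θ).1 hΘ
  have hsum : A + Θ * Aᵀ * Θ⁻¹ = -℧ * Θ⁻¹ := by
    rw [← add_conj_transpose_mul_eq_neg hΘ h℧, mul_nonsing_inv_cancel_right _ _ hΘdet]
  rw [SemiconjBy, hsum]
  simp only [Matrix.mul_assoc, neg_mul, mul_neg, nonsing_inv_mul_cancel_left _ _ hΘdet,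
    nonsing_inv_mul_cancel_left _ _ ((isUnit_iff_isUnit_det ℧).1 h℧inv)]

end Realizability

section Kernel

variable {A Θ : Matrix ι ι ℝ}

theorem ite_exp_eq_exp_mul_of_nonpos (hΘ : IsUnit Θ) {τ : ℝ} (hτ : τ ≤ 0) :
    (if 0 ≤ τ then exp (τ • A) * Θ else Θ * exp ((-τ) • Aᵀ)) =
      exp (τ • -(Θ * Aᵀ * Θ⁻¹)) * Θ := by
  split_ifs with h
  · obtain rfl : τ = 0 := le_antisymm hτ h
    simp
  · rw [mul_exp_eq_exp_conj_mul hΘ, Matrix.mul_smul, Matrix.smul_mul, neg_smul, smul_neg]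

theorem integral_kernel_mulVec_eq_sub (hΘ : IsUnit Θ) {Λ : ℝ → Matrix ι ι ℝ}
    (hΛ : ∀ τ : ℝ, Λ τ = if 0 ≤ τ then exp (τ • A) * Θ else Θ * exp ((-τ) • Aᵀ))
    {f F : ℝ → ι → ℂ} (hF : Continuous F) {T s : ℝ} (hFf : EqOn F f (Icc 0 T))
    (hs : s ∈ Icc 0 T) :
    ∫ t in 0..T, (Λ (s - t)).map Complex.ofReal *ᵥ f t =
      (∫ t in 0..s, exp ((s - t) • ofRealMulVecCLM A) (ofRealMulVecCLM Θ (F t))) -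
        ∫ t in T..s, exp ((s - t) • -ofRealMulVecCLM (Θ * Aᵀ * Θ⁻¹)) (ofRealMulVecCLM Θ (F t)) := by
  have hw := (ofRealMulVecCLM Θ).continuous.comp hF
  rw [intervalIntegral.integral_symm s T, sub_neg_eq_add]
  refine intervalIntegral.integral_eq_add_of_eqOn_Icc hs (continuous_exp_smul_apply _ hw s)
    (continuous_exp_smul_apply _ hw s) (fun t ht ↦ ?_) (fun t ht ↦ ?_)
  · rw [← ofRealMulVecCLM_apply, hΛ, if_pos (sub_nonneg.2 ht.2), map_mul, ofRealMulVecCLM_exp,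
      map_smul, hFf ⟨ht.1, ht.2.trans hs.2⟩]
    rfl
  · rw [← ofRealMulVecCLM_apply, hΛ, ite_exp_eq_exp_mul_of_nonpos hΘ (sub_nonpos.2 ht.1),
      map_mul, ofRealMulVecCLM_exp, map_smul, map_neg, hFf ⟨hs.1.trans ht.1, ht.2⟩]
    rfl

end Kernel

end Matrix

theorem stmt0_general
    (n : ℕ) (T : ℝ) (hT : 0 < T)
    (A Θ : Matrix (Fin n) (Fin n) ℝ)
    (hΘinv : IsUnit Θ)
    (℧ : Matrix (Fin n) (Fin n) ℝ)
    (h℧ : ℧ = -(A * Θ + Θ * Aᵀ)) (h℧inv : IsUnit ℧)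
    (Λ : ℝ → Matrix (Fin n) (Fin n) ℝ)
    (hΛ : ∀ τ : ℝ, Λ τ = if 0 ≤ τ then exp (τ • A) * Θ else Θ * exp ((-τ) • Aᵀ))
    (f : ℝ → Fin n → ℂ) (hf : ContinuousOn f (Set.Icc 0 T))
    (g : ℝ → Fin n → ℂ)
    (hg : ∀ s : ℝ, g s = ∫ t in (0:ℝ)..T, ((Λ (s - t)).map (Complex.ofReal)) *ᵥ f t) :
    ∃ g' g'' : ℝ → Fin n → ℂ,
      (∀ s ∈ Set.Icc (0:ℝ) T, HasDerivWithinAt g (g' s) (Set.Icc 0 T) s) ∧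
      (∀ s ∈ Set.Icc (0:ℝ) T, HasDerivWithinAt g' (g'' s) (Set.Icc 0 T) s) ∧
      ContinuousOn g' (Set.Icc 0 T) ∧
      ContinuousOn g'' (Set.Icc 0 T) ∧
      (∀ s ∈ Set.Icc (0:ℝ) T,
        g'' s + ((℧ * Aᵀ * ℧⁻¹ - A).map (Complex.ofReal)) *ᵥ g' s
          - ((℧ * Aᵀ * ℧⁻¹ * A).map (Complex.ofReal)) *ᵥ g s
          = (-℧).map (Complex.ofReal) *ᵥ f s) ∧
      g' 0 = (-(Θ * Aᵀ * Θ⁻¹)).map (Complex.ofReal) *ᵥ g 0 ∧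
      g' T = (A.map (Complex.ofReal)) *ᵥ g T := by
  set φ : Matrix (Fin n) (Fin n) ℝ →ₐ[ℝ] _ := ofRealMulVecCLM
  set a := φ A
  set d := φ (Θ * Aᵀ * Θ⁻¹)
  obtain ⟨F, hF, hFf⟩ := hf.exists_continuous_eqOn_Icc hT.le
  set w := fun t ↦ φ Θ (F t)
  have hw : Continuous w := (φ Θ).continuous.comp hF
  set u := fun s ↦ ∫ t in 0..s, exp ((s - t) • a) (w t)
  set V := fun s ↦ ∫ t in T..s, exp ((s - t) • -d) (w t)
  have hu : ∀ s, HasDerivAt u (a (u s) + w s) s := hasDerivAt_integral_exp_smul_apply a hw 0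
  have hV : ∀ s, HasDerivAt V ((-d) (V s) + w s) s := hasDerivAt_integral_exp_smul_apply _ hw T
  have hgs : ∀ s ∈ Icc 0 T, g s = u s - V s := fun s hs ↦
    (hg s).trans (integral_kernel_mulVec_eq_sub hΘinv hΛ hF hFf hs)
  have hu_cont : Continuous u := continuous_iff_continuousAt.2 fun s ↦ (hu s).continuousAt
  have hV_cont : Continuous V := continuous_iff_continuousAt.2 fun s ↦ (hV s).continuousAt
  refine ⟨fun s ↦ a (u s) + d (V s), fun s ↦ a (a (u s) + w s) + d ((-d) (V s) + w s),
    fun s hs ↦ ?_, fun s _ ↦ ?_, by fun_prop, by fun_prop, fun s hs ↦ ?_, ?_, ?_⟩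
  · refine (((hu s).sub (hV s)).congr_deriv ?_).hasDerivWithinAt.congr hgs (hgs s hs)
    rw [add_sub_add_right_eq_sub, _root_.neg_apply, sub_neg_eq_add]
  · exact ((a.hasFDerivAt.comp_hasDerivAt s (hu s)).add
      (d.hasFDerivAt.comp_hasDerivAt s (hV s))).hasDerivWithinAt
  · have hd : SemiconjBy (a + d) d (φ (℧ * Aᵀ * ℧⁻¹)) := by
      simpa only [map_add] using (semiconjBy_add_conj_transpose hΘinv h℧ h℧inv).map φ
    have hθ : (a + d) * φ Θ = φ (-℧) := by
      rw [← add_conj_transpose_mul_eq_neg hΘinv h℧, map_mul, map_add]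
    show a (a (u s) + w s) + d ((-d) (V s) + w s) + φ (℧ * Aᵀ * ℧⁻¹ - A) (a (u s) + d (V s))
      - φ (℧ * Aᵀ * ℧⁻¹ * A) (g s) = φ (-℧) (f s)
    rw [hgs s hs, ← hFf hs, map_sub, map_mul φ (℧ * Aᵀ * ℧⁻¹) A, ← hθ]
    exact hd.second_order_apply_eq _ _ _
  · show a (u 0) + d (V 0) = φ (-(Θ * Aᵀ * Θ⁻¹)) (g 0)
    rw [hgs 0 ⟨le_rfl, hT.le⟩, show u 0 = 0 from intervalIntegral.integral_same, map_neg φ,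
      map_zero, zero_add, zero_sub, map_neg, _root_.neg_apply, neg_neg]
  · show a (u T) + d (V T) = a (g T)
    rw [hgs T ⟨hT.le, le_rfl⟩, show V T = 0 from intervalIntegral.integral_same]
    simp

/-- Let `Λ` be the two-point commutator kernel of an open quantum harmonic
oscillator with Hurwitz-free data `A`, `Θ` (antisymmetric, invertible), and
`℧ := -(AΘ + ΘAᵀ)` invertible.  For a continuous `f : [0,T] → ℂⁿ`, the function
`g(s) = ∫₀ᵀ Λ(s-t) f(t) dt` is twice continuously differentiable on `[0,T]`, satisfies the
second-order ODE `g'' + (℧Aᵀ℧⁻¹ - A) g' - ℧Aᵀ℧⁻¹A g = -℧ f` on `[0,T]`, and the boundary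
conditions `g'(0) = -ΘAᵀΘ⁻¹ g(0)`, `g'(T) = A g(T)`. -/
theorem stmt0
    (n : ℕ) (T : ℝ) (hT : 0 < T)
    (A Θ : Matrix (Fin n) (Fin n) ℝ)
    (hΘskew : Θᵀ = -Θ) (hΘinv : IsUnit Θ)
    (℧ : Matrix (Fin n) (Fin n) ℝ)
    (h℧ : ℧ = -(A * Θ + Θ * Aᵀ)) (h℧inv : IsUnit ℧)
    (Λ : ℝ → Matrix (Fin n) (Fin n) ℝ)
    (hΛ : ∀ τ : ℝ, Λ τ = if 0 ≤ τ then exp (τ • A) * Θ else Θ * exp ((-τ) • Aᵀ))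
    (f : ℝ → Fin n → ℂ) (hf : ContinuousOn f (Set.Icc 0 T))
    (g : ℝ → Fin n → ℂ)
    (hg : ∀ s : ℝ, g s = ∫ t in (0:ℝ)..T, ((Λ (s - t)).map (Complex.ofReal)) *ᵥ f t) :
    ∃ g' g'' : ℝ → Fin n → ℂ,
      (∀ s ∈ Set.Icc (0:ℝ) T, HasDerivWithinAt g (g' s) (Set.Icc 0 T) s) ∧
      (∀ s ∈ Set.Icc (0:ℝ) T, HasDerivWithinAt g' (g'' s) (Set.Icc 0 T) s) ∧
      ContinuousOn g' (Set.Icc 0 T) ∧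
      ContinuousOn g'' (Set.Icc 0 T) ∧
      (∀ s ∈ Set.Icc (0:ℝ) T,
        g'' s + ((℧ * Aᵀ * ℧⁻¹ - A).map (Complex.ofReal)) *ᵥ g' s
          - ((℧ * Aᵀ * ℧⁻¹ * A).map (Complex.ofReal)) *ᵥ g s
          = (-℧).map (Complex.ofReal) *ᵥ f s) ∧
      g' 0 = (-(Θ * Aᵀ * Θ⁻¹)).map (Complex.ofReal) *ᵥ g 0 ∧
      g' T = (A.map (Complex.ofReal)) *ᵥ g T :=
  stmt0_general n T hT A Θ hΘinv ℧ h℧ h℧inv Λ hΛ f hf g hg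
end

section
/- If f : [0,T] → ℂⁿ is continuous and ∫₀ᵀ Λ(s−t) f(t) dt = 0 for all s ∈ [0,T], then f is identically zero. In particular, 0 is not an eigenvalue of the integral operator 𝓛 with kernel Λ. -/
/-!
Put `K₁ s = ∫₀ˢ e^{-ta} θ g(t) dt`, `K₂ s = ∫ₛᵀ e^{tb} g(t) dt` and `M s = e^{-sa} θ e^{-sb}`.
Splitting the integral at `t = s` turns the kernel equation into `e^{sa} (K₁ s + M s K₂ s) = 0`,
so `K₁ + M K₂` vanishes on `[0,T]`. In its derivative the two terms containing `g s` cancel,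
leaving `-e^{-sa} (aθ + θb) e^{-sb} K₂ s = 0`. As `aθ + θb = -℧` is invertible, `K₂ = 0` on
`(0,T)`; differentiating `K₂` once more gives `g = 0` there, hence on `[0,T]` by continuity.

The real matrices are made to act on `ℂⁿ` as real-linear operators, and the argument is run in
the Banach algebra of bounded operators on an arbitrary real Banach space.
-/

open MeasureTheory Matrix Set NormedSpace

section Exp

variable {𝔸 : Type*} [NormedRing 𝔸] [NormedAlgebra ℝ 𝔸] [CompleteSpace 𝔸]

theorem exp_add_smul (x : 𝔸) (s t : ℝ) : exp ((s + t) • x) = exp (s • x) * exp (t • x) := by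
  let := NormedAlgebra.restrictScalars ℚ ℝ 𝔸
  rw [add_smul]
  exact exp_add_of_commute (((Commute.refl x).smul_left s).smul_right t)

theorem exp_neg_smul_mul_exp_smul (x : 𝔸) (s : ℝ) : exp ((-s) • x) * exp (s • x) = 1 := by
  rw [← exp_add_smul, neg_add_cancel, zero_smul, exp_zero]

theorem exp_smul_mul_exp_neg_smul (x : 𝔸) (s : ℝ) : exp (s • x) * exp ((-s) • x) = 1 := by
  rw [← exp_add_smul, add_neg_cancel, zero_smul, exp_zero]

theorem isUnit_exp_smul (x : 𝔸) (s : ℝ) : IsUnit (exp (s • x)) :=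
  ⟨⟨_, _, exp_smul_mul_exp_neg_smul x s, exp_neg_smul_mul_exp_smul x s⟩, rfl⟩

theorem continuous_exp_smul (x : 𝔸) : Continuous fun u : ℝ => exp (u • x) := by
  let := NormedAlgebra.restrictScalars ℚ ℝ 𝔸
  fun_prop

theorem hasDerivAt_exp_neg_smul (x : 𝔸) (s : ℝ) :
    HasDerivAt (fun u : ℝ => exp ((-u) • x)) (-(exp ((-s) • x) * x)) s := by
  have h := (hasDerivAt_exp_smul_const x (-s)).scomp s (hasDerivAt_neg s)
  rwa [neg_one_smul] at h

theorem hasDerivAt_exp_neg_smul' (x : 𝔸) (s : ℝ) :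
    HasDerivAt (fun u : ℝ => exp ((-u) • x)) (-(x * exp ((-s) • x))) s := by
  have h := (hasDerivAt_exp_smul_const' x (-s)).scomp s (hasDerivAt_neg s)
  rwa [neg_one_smul] at h

theorem hasDerivAt_exp_neg_smul_mul_mul_exp_neg_smul (a b θ : 𝔸) (s : ℝ) :
    HasDerivAt (fun u : ℝ => exp ((-u) • a) * θ * exp ((-u) • b))
      (-(exp ((-s) • a) * (a * θ + θ * b) * exp ((-s) • b))) s := by
  refine (((hasDerivAt_exp_neg_smul a s).mul_const θ).mul
    (hasDerivAt_exp_neg_smul' b s)).congr_deriv ?_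
  noncomm_ring

end Exp

/-- The kernel `Λ` of the paper is `commutatorKernel A Aᵀ Θ`. -/
noncomputable def commutatorKernel {𝔸 : Type*} [Ring 𝔸] [TopologicalSpace 𝔸]
    [IsTopologicalRing 𝔸] [Module ℝ 𝔸] (a b θ : 𝔸) (τ : ℝ) : 𝔸 :=
  if 0 ≤ τ then exp (τ • a) * θ else θ * exp ((-τ) • b)

section Kernel

variable {𝔸 : Type*} [NormedRing 𝔸] [NormedAlgebra ℝ 𝔸] [CompleteSpace 𝔸] (a b θ : 𝔸)

theorem continuous_commutatorKernel : Continuous (commutatorKernel a b θ) := by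
  let := NormedAlgebra.restrictScalars ℚ ℝ 𝔸
  refine Continuous.if_le (by fun_prop) (by fun_prop) continuous_const continuous_id ?_
  rintro τ rfl
  simp

theorem commutatorKernel_sub_of_le {s t : ℝ} (h : t ≤ s) :
    commutatorKernel a b θ (s - t) = exp (s • a) * (exp ((-t) • a) * θ) := by
  rw [commutatorKernel, if_pos (sub_nonneg.mpr h), ← mul_assoc, ← exp_add_smul, sub_eq_add_neg]

theorem commutatorKernel_sub_of_ge {s t : ℝ} (h : s ≤ t) :
    commutatorKernel a b θ (s - t) = θ * (exp ((-s) • b) * exp (t • b)) := by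
  rw [← exp_add_smul, neg_add_eq_sub, commutatorKernel]
  rcases h.eq_or_lt with rfl | hlt
  · simp
  · rw [if_neg (by linarith), neg_sub]

theorem map_commutatorKernel {𝔹 : Type*} [NormedRing 𝔹] [NormedAlgebra ℝ 𝔹]
    (ψ : 𝔸 →ₐ[ℝ] 𝔹) (hψ : Continuous ψ) (τ : ℝ) :
    ψ (commutatorKernel a b θ τ) = commutatorKernel (ψ a) (ψ b) (ψ θ) τ := by
  let := NormedAlgebra.restrictScalars ℚ ℝ 𝔸
  let := NormedAlgebra.restrictScalars ℚ ℝ 𝔹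
  unfold commutatorKernel
  split_ifs <;> simp only [map_mul, map_exp ψ hψ, map_smul]

end Kernel

theorem HasDerivAt.eq_zero_of_eventuallyEq_zero {𝕜 E : Type*} [NontriviallyNormedField 𝕜]
    [NormedAddCommGroup E] [NormedSpace 𝕜 E] {f : 𝕜 → E} {f' : E} {s : 𝕜} (hf : HasDerivAt f f' s)
    (h : f =ᶠ[nhds s] 0) : f' = 0 :=
  hf.unique ((hasDerivAt_const s 0).congr_of_eventuallyEq h)

section Operator

variable {E : Type*} [NormedAddCommGroup E] [NormedSpace ℝ E] [CompleteSpace E]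

theorem ContinuousOn.hasDerivAt_integral_right {h : ℝ → E} {a c s : ℝ}
    (hh : ContinuousOn h (Icc a c)) (hs : s ∈ Ioo a c) :
    HasDerivAt (fun u => ∫ t in a..u, h t) (h s) s :=
  intervalIntegral.integral_hasDerivAt_right
    ((hh.mono (Icc_subset_Icc le_rfl hs.2.le)).intervalIntegrable_of_Icc hs.1.le)
    ((hh.mono Ioo_subset_Icc_self).stronglyMeasurableAtFilter isOpen_Ioo s hs)
    (hh.continuousAt (Icc_mem_nhds hs.1 hs.2))

theorem ContinuousOn.hasDerivAt_integral_left {h : ℝ → E} {a c s : ℝ}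
    (hh : ContinuousOn h (Icc a c)) (hs : s ∈ Ioo a c) :
    HasDerivAt (fun u => ∫ t in u..c, h t) (-h s) s :=
  intervalIntegral.integral_hasDerivAt_left
    ((hh.mono (Icc_subset_Icc hs.1.le le_rfl)).intervalIntegrable_of_Icc hs.2.le)
    ((hh.mono Ioo_subset_Icc_self).stronglyMeasurableAtFilter isOpen_Ioo s hs)
    (hh.continuousAt (Icc_mem_nhds hs.1 hs.2))

variable {a b θ : E →L[ℝ] E} {T : ℝ} {g : ℝ → E}

theorem integral_commutatorKernel_apply_eq (hg : ContinuousOn g (Icc 0 T)) {s : ℝ}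
    (hs : s ∈ Icc 0 T) :
    ∫ t in 0..T, commutatorKernel a b θ (s - t) (g t) =
      exp (s • a) (∫ t in 0..s, exp ((-t) • a) (θ (g t))) +
        (θ * exp ((-s) • b)) (∫ t in s..T, exp (t • b) (g t)) := by
  have hcont : ContinuousOn (fun t => commutatorKernel a b θ (s - t) (g t)) (Icc 0 T) :=
    ((continuous_commutatorKernel a b θ).comp (continuous_sub_left s)).continuousOn.clm_apply hg
  have hK₁ : ContinuousOn (fun t => exp ((-t) • a) (θ (g t))) (Icc 0 T) :=
    ((continuous_exp_smul a).comp continuous_neg).continuousOn.clm_apply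
      (θ.continuous.comp_continuousOn hg)
  have hK₂ : ContinuousOn (fun t => exp (t • b) (g t)) (Icc 0 T) :=
    (continuous_exp_smul b).continuousOn.clm_apply hg
  rw [← intervalIntegral.integral_add_adjacent_intervals
    ((hcont.mono (Icc_subset_Icc le_rfl hs.2)).intervalIntegrable_of_Icc hs.1)
    ((hcont.mono (Icc_subset_Icc hs.1 le_rfl)).intervalIntegrable_of_Icc hs.2)]
  congr 1
  · rw [← ContinuousLinearMap.intervalIntegral_comp_comm _
      ((hK₁.mono (Icc_subset_Icc le_rfl hs.2)).intervalIntegrable_of_Icc hs.1)]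
    refine intervalIntegral.integral_congr fun t ht => ?_
    rw [uIcc_of_le hs.1] at ht
    simp only [commutatorKernel_sub_of_le a b θ ht.2, mul_apply_eq_comp]
  · rw [← ContinuousLinearMap.intervalIntegral_comp_comm _
      ((hK₂.mono (Icc_subset_Icc hs.1 le_rfl)).intervalIntegrable_of_Icc hs.2)]
    refine intervalIntegral.integral_congr fun t ht => ?_
    rw [uIcc_of_le hs.2] at ht
    simp only [commutatorKernel_sub_of_ge a b θ ht.1, mul_apply_eq_comp]

theorem eqOn_zero_of_integral_commutatorKernel_apply_eq_zero (hω : IsUnit (a * θ + θ * b))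
    (hT : 0 < T) (hg : ContinuousOn g (Icc 0 T))
    (h : ∀ s ∈ Icc 0 T, ∫ t in 0..T, commutatorKernel a b θ (s - t) (g t) = 0) :
    EqOn g 0 (Icc 0 T) := by
  set K₁ : ℝ → E := fun s => ∫ t in 0..s, exp ((-t) • a) (θ (g t))
  set K₂ : ℝ → E := fun s => ∫ t in s..T, exp (t • b) (g t)
  set M : ℝ → E →L[ℝ] E := fun s => exp ((-s) • a) * θ * exp ((-s) • b)
  have hK₁ : ∀ s ∈ Ioo 0 T, HasDerivAt K₁ (exp ((-s) • a) (θ (g s))) s := fun s hs =>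
    (((continuous_exp_smul a).comp continuous_neg).continuousOn.clm_apply
      (θ.continuous.comp_continuousOn hg)).hasDerivAt_integral_right hs
  have hK₂ : ∀ s ∈ Ioo 0 T, HasDerivAt K₂ (-exp (s • b) (g s)) s := fun s hs =>
    ((continuous_exp_smul b).continuousOn.clm_apply hg).hasDerivAt_integral_left hs
  have hsum : EqOn (fun s => K₁ s + M s (K₂ s)) 0 (Icc 0 T) := by
    intro s hs
    have hM : exp (s • a) * M s = θ * exp ((-s) • b) := by
      rw [← mul_assoc, ← mul_assoc, exp_smul_mul_exp_neg_smul a s, one_mul]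
    refine (isUnit_exp_smul a s).smul_eq_zero.mp ?_
    change exp (s • a) (K₁ s + M s (K₂ s)) = 0
    rw [← h s hs, integral_commutatorKernel_apply_eq hg hs, map_add, ← hM]
    rfl
  have hK₂_zero : EqOn K₂ 0 (Ioo 0 T) := by
    intro s hs
    have hderiv := ((hK₁ s hs).add
      ((hasDerivAt_exp_neg_smul_mul_mul_exp_neg_smul a b θ s).clm_apply (hK₂ s hs)))
      |>.eq_zero_of_eventuallyEq_zero (Filter.eventuallyEq_of_mem (Icc_mem_nhds hs.1 hs.2) hsum)
    have hcancel : M s (-exp (s • b) (g s)) = -exp ((-s) • a) (θ (g s)) := by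
      rw [map_neg, ← mul_apply_eq_comp, mul_assoc _ (exp _), exp_neg_smul_mul_exp_smul b s,
        mul_one]
      rfl
    rw [hcancel, _root_.neg_apply] at hderiv
    refine (((isUnit_exp_smul a (-s)).mul hω).mul (isUnit_exp_smul b (-s))).smul_eq_zero.mp ?_
    rw [← neg_eq_zero, ← hderiv]
    abel
  have hg_zero : EqOn g 0 (Ioo 0 T) := by
    intro s hs
    refine (isUnit_exp_smul b s).smul_eq_zero.mp (neg_eq_zero.mp ?_)
    exact (hK₂ s hs).eq_zero_of_eventuallyEq_zero
      (Filter.eventuallyEq_of_mem (isOpen_Ioo.mem_nhds hs) hK₂_zero)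
  exact hg_zero.of_subset_closure hg continuousOn_const Ioo_subset_Icc_self
    (closure_Ioo hT.ne).ge

end Operator

namespace Matrix

variable (m : Type*) [Fintype m] [DecidableEq m]

noncomputable def ofRealMulVecAlgHom : Matrix m m ℝ →ₐ[ℝ] ((m → ℂ) →L[ℝ] (m → ℂ)) :=
  AlgHom.ofLinearMap
    { toFun := fun X => LinearMap.toContinuousLinearMap
        (((X.map Complex.ofReal).mulVecLin).restrictScalars ℝ)
      map_add' := fun X Y => by
        ext1 v
        simp [Matrix.map_add _ Complex.ofReal_add]
      map_smul' := fun r X => by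
        ext v i
        simp [mulVec, dotProduct, Finset.mul_sum, mul_assoc] }
    (by ext1 v; simp [Matrix.map_one _ Complex.ofReal_zero Complex.ofReal_one])
    (fun X Y => by
      ext1 v
      simp only [LinearMap.coe_mk, AddHom.coe_mk, LinearMap.coe_toContinuousLinearMap',
        LinearMap.coe_restrictScalars, mulVecBilin_apply, mul_apply_eq_comp, mulVec_mulVec]
      exact congrArg (· *ᵥ v) (Matrix.map_mul (f := Complex.ofRealHom)))

theorem continuous_ofRealMulVecAlgHom : Continuous (ofRealMulVecAlgHom m) :=
  (ofRealMulVecAlgHom m).toLinearMap.continuous_of_finiteDimensional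

attribute [local instance] Matrix.linftyOpNormedRing Matrix.linftyOpNormedAlgebra in
theorem ofRealMulVecAlgHom_commutatorKernel (a b θ : Matrix m m ℝ) (τ : ℝ) :
    ofRealMulVecAlgHom m (commutatorKernel a b θ τ) =
      commutatorKernel (ofRealMulVecAlgHom m a) (ofRealMulVecAlgHom m b)
        (ofRealMulVecAlgHom m θ) τ :=
  map_commutatorKernel a b θ _ (continuous_ofRealMulVecAlgHom m) τ

end Matrix

theorem stmt1_general
    (n : ℕ) (T : ℝ) (hT : 0 < T)
    (A Θ : Matrix (Fin n) (Fin n) ℝ)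
    (℧ : Matrix (Fin n) (Fin n) ℝ)
    (h℧ : ℧ = -(A * Θ + Θ * Aᵀ)) (h℧inv : IsUnit ℧)
    (Λ : ℝ → Matrix (Fin n) (Fin n) ℝ)
    (hΛ : ∀ τ : ℝ, Λ τ = if 0 ≤ τ then exp (τ • A) * Θ else Θ * exp ((-τ) • Aᵀ))
    (f : ℝ → Fin n → ℂ) (hf : ContinuousOn f (Set.Icc 0 T))
    (hker : ∀ s ∈ Set.Icc (0:ℝ) T,
      (∫ t in (0:ℝ)..T, ((Λ (s - t)).map (Complex.ofReal)) *ᵥ f t) = 0) :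
    ∀ t ∈ Set.Icc (0:ℝ) T, f t = 0 := by
  set φ := Matrix.ofRealMulVecAlgHom (Fin n)
  have hΛφ (τ : ℝ) : φ (Λ τ) = commutatorKernel (φ A) (φ Aᵀ) (φ Θ) τ := by
    rw [← Matrix.ofRealMulVecAlgHom_commutatorKernel, hΛ]
    rfl
  have hω : IsUnit (φ A * φ Θ + φ Θ * φ Aᵀ) := by
    have := (h℧inv.map φ).neg
    rwa [h℧, map_neg, neg_neg, map_add, map_mul, map_mul] at this
  refine eqOn_zero_of_integral_commutatorKernel_apply_eq_zero hω hT hf fun s hs => ?_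
  simp_rw [← hΛφ]
  exact hker s hs

/-- With `Θ` antisymmetric invertible, `℧ := -(AΘ + ΘAᵀ)` invertible and
`Λ` the two-point commutator kernel, if a continuous `f : [0,T] → ℂⁿ` satisfies
`∫₀ᵀ Λ(s-t) f(t) dt = 0` for all `s ∈ [0,T]`, then `f` vanishes identically on `[0,T]`
(so `0` is not an eigenvalue of the integral operator with kernel `Λ`). -/
theorem stmt1
    (n : ℕ) (T : ℝ) (hT : 0 < T)
    (A Θ : Matrix (Fin n) (Fin n) ℝ)
    (hΘskew : Θᵀ = -Θ) (hΘinv : IsUnit Θ)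
    (℧ : Matrix (Fin n) (Fin n) ℝ)
    (h℧ : ℧ = -(A * Θ + Θ * Aᵀ)) (h℧inv : IsUnit ℧)
    (Λ : ℝ → Matrix (Fin n) (Fin n) ℝ)
    (hΛ : ∀ τ : ℝ, Λ τ = if 0 ≤ τ then exp (τ • A) * Θ else Θ * exp ((-τ) • Aᵀ))
    (f : ℝ → Fin n → ℂ) (hf : ContinuousOn f (Set.Icc 0 T))
    (hker : ∀ s ∈ Set.Icc (0:ℝ) T,
      (∫ t in (0:ℝ)..T, ((Λ (s - t)).map (Complex.ofReal)) *ᵥ f t) = 0) :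
    ∀ t ∈ Set.Icc (0:ℝ) T, f t = 0 :=
  stmt1_general n T hT A Θ ℧ h℧ h℧inv Λ hΛ f hf hker
end

section
/- For every T ≥ 0, the matrix G(T) := U e^{TF} V ∈ ℝ^{n×n} is invertible. -/
open Matrix NormedSpace

/-!
Put `S := ℧Θ⁻¹`. The realizability identity gives `ΘAᵀΘ⁻¹ = -S - A`, and
`℧Aᵀ℧⁻¹ S = ℧AᵀΘ⁻¹ = S ΘAᵀΘ⁻¹`; together these say exactly that `F V = V (S + A)`.
Hence `e^{TF} V = V e^{T(S + A)}`, and since `U V = A + ΘAᵀΘ⁻¹ = -S`,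
`G(T) = -S e^{T(S + A)}` is a product of invertible matrices.
-/

namespace Matrix

variable {m k 𝕂 : Type*} [Fintype m] [DecidableEq m] [Fintype k] [DecidableEq k] [RCLike 𝕂]

theorem pow_mul_eq_mul_pow {X : Matrix m m 𝕂} {Y : Matrix k k 𝕂} {V : Matrix m k 𝕂}
    (h : X * V = V * Y) (j : ℕ) : X ^ j * V = V * Y ^ j := by
  induction j with
  | zero => simp
  | succ j ih => rw [pow_succ, Matrix.mul_assoc, h, ← Matrix.mul_assoc, ih, Matrix.mul_assoc,
      ← pow_succ]

open scoped Norms.Operator in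
theorem exp_mul_eq_mul_exp {X : Matrix m m 𝕂} {Y : Matrix k k 𝕂} {V : Matrix m k 𝕂}
    (h : X * V = V * Y) : exp X * V = V * exp Y := by
  let mulV := mulRightLinearMap m 𝕂 V
  let Vmul := mulLeftLinearMap k 𝕂 V
  have hX := (expSeries_summable' (𝕂 := 𝕂) X).map_tsum mulV mulV.continuous_of_finiteDimensional
  have hY := (expSeries_summable' (𝕂 := 𝕂) Y).map_tsum Vmul Vmul.continuous_of_finiteDimensional
  simp only [mulV, Vmul, mulRightLinearMap_apply, mulLeftLinearMap_apply, smul_mul,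
    Matrix.mul_smul, pow_mul_eq_mul_pow h] at hX hY
  simp only [exp_eq_tsum 𝕂]
  exact hX.trans hY.symm

variable {n R : Type*} [Fintype n] [DecidableEq n] [Ring R]

theorem fromBlocks_mul_fromRows_eq_fromRows_mul {A B K S : Matrix n n R}
    (hB : B = -S - A) (hKS : K * S = S * B) :
    fromBlocks 0 (1 : Matrix n n R) (K * A) (A - K) * fromRows (1 : Matrix n n R) (-B) =
      fromRows 1 (-B) * (S + A) := by
  subst hB
  rw [fromBlocks_mul_fromRows, fromRows_mul]
  congr 1
  · noncomm_ring
  · calc K * A * 1 + (A - K) * -(-S - A) = A * S + A * A - K * S := by noncomm_ring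
      _ = -(-S - A) * (S + A) := by rw [hKS]; noncomm_ring

end Matrix

theorem stmt2_general
    (n : ℕ)
    (A Θ : Matrix (Fin n) (Fin n) ℝ)
    (hΘinv : IsUnit Θ)
    (℧ : Matrix (Fin n) (Fin n) ℝ)
    (h℧ : ℧ = -(A * Θ + Θ * Aᵀ)) (h℧inv : IsUnit ℧)
    (F : Matrix (Fin n ⊕ Fin n) (Fin n ⊕ Fin n) ℝ)
    (hF : F = Matrix.fromBlocks 0 1 (℧ * Aᵀ * ℧⁻¹ * A) (A - ℧ * Aᵀ * ℧⁻¹))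
    (U : Matrix (Fin n) (Fin n ⊕ Fin n) ℝ)
    (hU : U = Matrix.fromCols A (-1))
    (V : Matrix (Fin n ⊕ Fin n) (Fin n) ℝ)
    (hV : V = Matrix.fromRows 1 (-(Θ * Aᵀ * Θ⁻¹)))
    (T : ℝ) :
    IsUnit (U * NormedSpace.exp (T • F) * V) := by
  have hΘ : IsUnit Θ.det := (isUnit_iff_isUnit_det Θ).mp hΘinv
  have h℧det : IsUnit ℧.det := (isUnit_iff_isUnit_det ℧).mp h℧inv
  set S := ℧ * Θ⁻¹
  have hB : Θ * Aᵀ * Θ⁻¹ = -S - A := by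
    rw [show Θ * Aᵀ = -℧ - A * Θ by rw [h℧]; abel, sub_mul, Matrix.mul_assoc,
      mul_nonsing_inv _ hΘ, Matrix.mul_one, neg_mul]
  have hKS : ℧ * Aᵀ * ℧⁻¹ * S = S * (Θ * Aᵀ * Θ⁻¹) := by
    simp only [S, Matrix.mul_assoc, nonsing_inv_mul_cancel_left _ _ h℧det,
      nonsing_inv_mul_cancel_left _ _ hΘ]
  have hFV : F * V = V * (S + A) := by
    rw [hF, hV]; exact fromBlocks_mul_fromRows_eq_fromRows_mul hB hKS
  have hUV : U * V = -S := by
    rw [hU, hV, fromCols_mul_fromRows, hB]; noncomm_ring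
  have hS : IsUnit S := h℧inv.mul (isUnit_nonsing_inv_iff.mpr hΘinv)
  have hG : U * exp (T • F) * V = -S * exp (T • (S + A)) := calc
    U * exp (T • F) * V = U * V * exp (T • (S + A)) := by
      have hFVT : T • F * V = V * T • (S + A) := by rw [smul_mul, hFV, Matrix.mul_smul]
      rw [Matrix.mul_assoc, exp_mul_eq_mul_exp hFVT, Matrix.mul_assoc]
    _ = -S * exp (T • (S + A)) := by rw [hUV]
  rw [hG]
  exact hS.neg.mul (isUnit_exp _)

/-- With `Θ` antisymmetric invertible and `℧ := -(AΘ + ΘAᵀ)` invertible,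
the matrix `G(T) := U e^{TF} V` is invertible for every `T ≥ 0`, where
`F = [[0, I],[℧Aᵀ℧⁻¹A, A - ℧Aᵀ℧⁻¹]]`, `U = [A, -I]`, `V = [I; -ΘAᵀΘ⁻¹]`. -/
theorem stmt2
    (n : ℕ)
    (A Θ : Matrix (Fin n) (Fin n) ℝ)
    (hΘskew : Θᵀ = -Θ) (hΘinv : IsUnit Θ)
    (℧ : Matrix (Fin n) (Fin n) ℝ)
    (h℧ : ℧ = -(A * Θ + Θ * Aᵀ)) (h℧inv : IsUnit ℧)
    (F : Matrix (Fin n ⊕ Fin n) (Fin n ⊕ Fin n) ℝ)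
    (hF : F = Matrix.fromBlocks 0 1 (℧ * Aᵀ * ℧⁻¹ * A) (A - ℧ * Aᵀ * ℧⁻¹))
    (U : Matrix (Fin n) (Fin n ⊕ Fin n) ℝ)
    (hU : U = Matrix.fromCols A (-1))
    (V : Matrix (Fin n ⊕ Fin n) (Fin n) ℝ)
    (hV : V = Matrix.fromRows 1 (-(Θ * Aᵀ * Θ⁻¹)))
    (T : ℝ) (hT : 0 ≤ T) :
    IsUnit (U * NormedSpace.exp (T • F) * V) :=
  stmt2_general n A Θ hΘinv ℧ h℧ h℧inv F hF U hU V hV T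
end

section
/- For every T ≥ 0, det(U e^{TF} V) = e^{−T·tr(A)} · det(−℧Θ⁻¹); in particular G(0) = UV = −℧Θ⁻¹. -/
/-!
`U F = M U` with `M = -℧ Aᵀ ℧⁻¹`, so `U e^{TF} = e^{TM} U` and `G(T) = e^{TM} (U V)`. Jacobi's
formula gives `det e^{TM} = e^{T tr M}`, and `tr M = -tr A` because `M` is similar to `-Aᵀ`.
Finally `U V = A + Θ Aᵀ Θ⁻¹ = (A Θ + Θ Aᵀ) Θ⁻¹ = -℧ Θ⁻¹`.
-/

open Matrix NormedSpace

namespace Matrix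

-- Any submultiplicative norm would do: it only serves to make `exp` and derivatives available.
attribute [local instance] Matrix.linftyOpNormedRing Matrix.linftyOpNormedAlgebra

variable {𝕂 k : Type*} [RCLike 𝕂] [Fintype k] [DecidableEq k]

theorem differentiable_det : Differentiable 𝕂 (det : Matrix k k 𝕂 → 𝕂) := by
  have hentry (i j : k) : Differentiable 𝕂 fun X : Matrix k k 𝕂 => X i j :=
    (LinearMap.toContinuousLinearMap (entryLinearMap 𝕂 𝕂 i j)).differentiable
  rw [show (det : Matrix k k 𝕂 → 𝕂) = _ from funext det_apply']
  fun_prop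

open Polynomial in
theorem hasDerivAt_det_one_add_smul (B : Matrix k k 𝕂) :
    HasDerivAt (fun s : 𝕂 => det (1 + s • B)) B.trace 0 := by
  have h := (det (1 + (X : 𝕂[X]) • B.map C)).hasDerivAt 0
  rw [derivative_det_one_add_X_smul] at h
  convert h using 2 with s
  rw [eval_det]
  congr 1
  ext i j
  simp [mul_comm]

theorem hasFDerivAt_det_one :
    HasFDerivAt (det : Matrix k k 𝕂 → 𝕂) (traceLinearMap k 𝕂 𝕂).toContinuousLinearMap 1 := by
  have hD := (differentiable_det (1 : Matrix k k 𝕂)).hasFDerivAt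
  convert hD using 1
  ext1 B
  have hline := ((hasDerivAt_id (0 : 𝕂)).smul_const B).const_add (1 : Matrix k k 𝕂)
  rw [one_smul] at hline
  have h := (differentiable_det (1 + (0 : 𝕂) • B)).hasFDerivAt.comp_hasDerivAt 0 hline
  rw [zero_smul, add_zero] at h
  exact (hasDerivAt_det_one_add_smul B).unique h

theorem hasDerivAt_det_exp_smul (B : Matrix k k 𝕂) (t : 𝕂) :
    HasDerivAt (fun s : 𝕂 => det (exp (s • B))) (det (exp (t • B)) * B.trace) t := by
  have hexp := (hasDerivAt_exp_smul_const B (t - t)).comp_sub_const t t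
  rw [sub_self, zero_smul, exp_zero, one_mul] at hexp
  have hdet := hasFDerivAt_det_one.comp_hasDerivAt_of_eq t hexp
    (by rw [sub_self, zero_smul, exp_zero])
  refine (hdet.const_mul (det (exp (t • B)))).congr_of_eventuallyEq (.of_forall fun s => ?_)
  have hsplit : s • B = t • B + (s - t) • B := by rw [← add_smul, add_sub_cancel]
  change det (exp (s • B)) = det (exp (t • B)) * det (exp ((s - t) • B))
  rw [hsplit, exp_add_of_commute _ _ (((Commute.refl B).smul_left t).smul_right (s - t)), det_mul]

theorem det_exp (B : Matrix k k 𝕂) : det (exp B) = exp B.trace := by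
  set g : 𝕂 → 𝕂 := fun s => det (exp (s • B)) * exp (s • -B.trace)
  have hg (s : 𝕂) : HasDerivAt g 0 s := by
    refine ((hasDerivAt_det_exp_smul B s).fun_mul
      (hasDerivAt_exp_smul_const (-B.trace) s)).congr_deriv ?_
    ring
  have hg1 : g 1 = g 0 := is_const_of_deriv_eq_zero (fun s => (hg s).differentiableAt)
    (fun s => (hg s).deriv) 1 0
  simp only [g, one_smul, zero_smul, exp_zero, det_one, one_mul] at hg1
  calc det (exp B) = det (exp B) * exp (-B.trace) * exp B.trace := by
        rw [mul_assoc, ← exp_add, neg_add_cancel, exp_zero, mul_one]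
    _ = exp B.trace := by rw [hg1, one_mul]

theorem mul_exp_eq_exp_mul_of_mul_eq {m : Type*} [Fintype m] [DecidableEq m] {U : Matrix k m 𝕂}
    {P : Matrix m m 𝕂} {Q : Matrix k k 𝕂} (h : U * P = Q * U) : U * exp P = exp Q * U := by
  have hpow (j : ℕ) : U * P ^ j = Q ^ j * U := by
    induction j with
    | zero => rw [pow_zero, pow_zero, Matrix.mul_one, Matrix.one_mul]
    | succ j ih =>
      rw [pow_succ, ← Matrix.mul_assoc, ih, Matrix.mul_assoc, h, pow_succ, Matrix.mul_assoc]
  have hP := (exp_series_hasSum_exp' (𝕂 := 𝕂) P).map (addMonoidHomMulLeft U)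
    (continuous_const.matrix_mul continuous_id)
  have hQ := (exp_series_hasSum_exp' (𝕂 := 𝕂) Q).map (addMonoidHomMulRight U)
    (continuous_id.matrix_mul continuous_const)
  refine hP.unique (hQ.congr_fun fun j => ?_)
  simp [addMonoidHomMulLeft, addMonoidHomMulRight, hpow]

end Matrix

theorem stmt3_general
    (n : ℕ)
    (A Θ : Matrix (Fin n) (Fin n) ℝ)
    (hΘinv : IsUnit Θ)
    (℧ : Matrix (Fin n) (Fin n) ℝ)
    (h℧ : ℧ = -(A * Θ + Θ * Aᵀ)) (h℧inv : IsUnit ℧)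
    (F : Matrix (Fin n ⊕ Fin n) (Fin n ⊕ Fin n) ℝ)
    (hF : F = Matrix.fromBlocks 0 1 (℧ * Aᵀ * ℧⁻¹ * A) (A - ℧ * Aᵀ * ℧⁻¹))
    (U : Matrix (Fin n) (Fin n ⊕ Fin n) ℝ)
    (hU : U = Matrix.fromCols A (-1))
    (V : Matrix (Fin n ⊕ Fin n) (Fin n) ℝ)
    (hV : V = Matrix.fromRows 1 (-(Θ * Aᵀ * Θ⁻¹))) :
    (∀ T : ℝ, 0 ≤ T →
      (U * NormedSpace.exp (T • F) * V).det = Real.exp (-(T * A.trace)) * (-(℧ * Θ⁻¹)).det) ∧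
    U * V = -(℧ * Θ⁻¹) := by
  have hUV : U * V = -(℧ * Θ⁻¹) := by
    rw [hU, hV, fromCols_mul_fromRows, h℧]
    simp only [Matrix.mul_one, Matrix.neg_mul, Matrix.one_mul, neg_neg, Matrix.add_mul,
      Matrix.mul_assoc, mul_nonsing_inv Θ ((isUnit_iff_isUnit_det Θ).mp hΘinv)]
  have hUF : U * F = -(℧ * Aᵀ * ℧⁻¹) * U := by
    rw [hU, hF, fromCols_mul_fromBlocks, Matrix.mul_fromCols]
    congr 1 <;> noncomm_ring
  have htrM : (-(℧ * Aᵀ * ℧⁻¹)).trace = -A.trace := by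
    rw [trace_neg, trace_mul_cycle, nonsing_inv_mul ℧ ((isUnit_iff_isUnit_det ℧).mp h℧inv),
      Matrix.one_mul, trace_transpose]
  refine ⟨fun T _ => ?_, hUV⟩
  have hpush : U * exp (T • F) = exp (T • -(℧ * Aᵀ * ℧⁻¹)) * U :=
    mul_exp_eq_exp_mul_of_mul_eq (by rw [Matrix.mul_smul, hUF, Matrix.smul_mul])
  rw [hpush, Matrix.mul_assoc, hUV, det_mul, det_exp, trace_smul, htrM, Real.exp_eq_exp_ℝ,
    smul_eq_mul, mul_neg]

/-- With the data of Statement 2,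
`det(U e^{TF} V) = e^{-T tr A} det(-℧Θ⁻¹)` for every `T ≥ 0`; in particular
`G(0) = U V = -℧Θ⁻¹`. -/
theorem stmt3
    (n : ℕ)
    (A Θ : Matrix (Fin n) (Fin n) ℝ)
    (hΘskew : Θᵀ = -Θ) (hΘinv : IsUnit Θ)
    (℧ : Matrix (Fin n) (Fin n) ℝ)
    (h℧ : ℧ = -(A * Θ + Θ * Aᵀ)) (h℧inv : IsUnit ℧)
    (F : Matrix (Fin n ⊕ Fin n) (Fin n ⊕ Fin n) ℝ)
    (hF : F = Matrix.fromBlocks 0 1 (℧ * Aᵀ * ℧⁻¹ * A) (A - ℧ * Aᵀ * ℧⁻¹))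
    (U : Matrix (Fin n) (Fin n ⊕ Fin n) ℝ)
    (hU : U = Matrix.fromCols A (-1))
    (V : Matrix (Fin n ⊕ Fin n) (Fin n) ℝ)
    (hV : V = Matrix.fromRows 1 (-(Θ * Aᵀ * Θ⁻¹))) :
    (∀ T : ℝ, 0 ≤ T →
      (U * NormedSpace.exp (T • F) * V).det = Real.exp (-(T * A.trace)) * (-(℧ * Θ⁻¹)).det) ∧
    U * V = -(℧ * Θ⁻¹) :=
  stmt3_general n A Θ hΘinv ℧ h℧ h℧inv F hF U hU V hV
end

section
/- The 2n×2n block matrix K := [[Iₙ, Θ],[A, −ΘAᵀ]] satisfies det(K) = det(℧); in particular K is invertible, with inverse K⁻¹ = [[Iₙ + Θ℧⁻¹A, −Θ℧⁻¹],[−℧⁻¹A, ℧⁻¹]]. -/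
/-! `℧` is the Schur complement `D - C * B` of the identity block of `K = [[1, B], [C, D]]`, so
the determinant and the inverse of `K` are given by the block formulas for that complement. -/

open Matrix

namespace Matrix

variable {m n R : Type*} [Fintype m] [Fintype n] [DecidableEq m] [DecidableEq n] [CommRing R]

theorem isUnit_fromBlocks_one₁₁_iff (B : Matrix m n R) (C : Matrix n m R) (D : Matrix n n R) :
    IsUnit (fromBlocks 1 B C D) ↔ IsUnit (D - C * B) := by
  rw [isUnit_iff_isUnit_det, det_fromBlocks_one₁₁, ← isUnit_iff_isUnit_det]

theorem inv_fromBlocks_one₁₁ (B : Matrix m n R) (C : Matrix n m R) (D : Matrix n n R)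
    (h : IsUnit (D - C * B)) :
    (fromBlocks 1 B C D)⁻¹ =
      fromBlocks (1 + B * (D - C * B)⁻¹ * C) (-(B * (D - C * B)⁻¹))
        (-((D - C * B)⁻¹ * C)) (D - C * B)⁻¹ := by
  obtain ⟨S, rfl⟩ : ∃ S, D = S + C * B := ⟨D - C * B, (sub_add_cancel D _).symm⟩
  rw [add_sub_cancel_right] at h ⊢
  have hS : S * S⁻¹ = 1 := mul_nonsing_inv S ((isUnit_iff_isUnit_det S).mp h)
  have hSC : S * (S⁻¹ * C) = C := by rw [← Matrix.mul_assoc, hS, Matrix.one_mul]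
  apply inv_eq_right_inv
  rw [fromBlocks_multiply, ← fromBlocks_one]
  congr 1 <;>
    simp only [Matrix.mul_add, Matrix.add_mul, Matrix.mul_neg, Matrix.one_mul, Matrix.mul_one,
      Matrix.mul_assoc, hS, hSC] <;>
    abel

end Matrix

theorem stmt6_general
    (n : ℕ)
    (A Θ : Matrix (Fin n) (Fin n) ℝ)
    (℧ : Matrix (Fin n) (Fin n) ℝ)
    (h℧ : ℧ = -(A * Θ + Θ * Aᵀ)) (h℧inv : IsUnit ℧)
    (K : Matrix (Fin n ⊕ Fin n) (Fin n ⊕ Fin n) ℝ)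
    (hK : K = Matrix.fromBlocks 1 Θ A (-(Θ * Aᵀ))) :
    K.det = ℧.det ∧ IsUnit K ∧
      K⁻¹ = Matrix.fromBlocks (1 + Θ * ℧⁻¹ * A) (-(Θ * ℧⁻¹)) (-(℧⁻¹ * A)) ℧⁻¹ := by
  have hschur : -(Θ * Aᵀ) - A * Θ = ℧ := by rw [h℧]; abel
  subst hK
  refine ⟨by rw [det_fromBlocks_one₁₁, hschur], ?_, ?_⟩
  · rwa [isUnit_fromBlocks_one₁₁_iff, hschur]
  · rw [inv_fromBlocks_one₁₁ _ _ _ (hschur ▸ h℧inv), hschur]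

/-- With `Θ` antisymmetric and `℧ := -(AΘ + ΘAᵀ)` invertible, the block
matrix `K = [[I, Θ],[A, -ΘAᵀ]]` satisfies `det K = det ℧`; in particular `K` is invertible,
with inverse `K⁻¹ = [[I + Θ℧⁻¹A, -Θ℧⁻¹],[-℧⁻¹A, ℧⁻¹]]`. -/
theorem stmt6
    (n : ℕ)
    (A Θ : Matrix (Fin n) (Fin n) ℝ)
    (hΘskew : Θᵀ = -Θ)
    (℧ : Matrix (Fin n) (Fin n) ℝ)
    (h℧ : ℧ = -(A * Θ + Θ * Aᵀ)) (h℧inv : IsUnit ℧)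
    (K : Matrix (Fin n ⊕ Fin n) (Fin n ⊕ Fin n) ℝ)
    (hK : K = Matrix.fromBlocks 1 Θ A (-(Θ * Aᵀ))) :
    K.det = ℧.det ∧ IsUnit K ∧
      K⁻¹ = Matrix.fromBlocks (1 + Θ * ℧⁻¹ * A) (-(Θ * ℧⁻¹)) (-(℧⁻¹ * A)) ℧⁻¹ :=
  stmt6_general n A Θ ℧ h℧ h℧inv K hK
end

section
/- For all s, t ∈ [0,T], the kernel admits the Green-function representation Λ(s−t) = [Iₙ 0] ( e^{sF} V G(T)⁻¹ U e^{(T−t)F} − χ_{[0,s]}(t) · e^{(s−t)F} ) [0; ℧], where χ_{[0,s]}(t) equals 1 if t ≤ s and 0 otherwise, [Iₙ 0] ∈ ℝ^{n×2n} and [0; ℧] ∈ ℝ^{2n×n}. -/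
/-!
`F` is the block companion matrix of the quadratic matrix polynomial `X² - (A - W) X - W A`,
`W = ℧ Aᵀ ℧⁻¹`, and both `A` and `M = -Θ Aᵀ Θ⁻¹` are right solvents of it, so that
`F [I; X] = [I; X] X` and hence `e^{τF} [I; X] = [I; X] e^{τX}` for `X ∈ {A, M}`.
Realizability gives `M - A = ℧ Θ⁻¹`, so `[0; ℧] = [I; M] Θ - [I; A] Θ`, and every factor of the
representation collapses: `[I 0] [I; X] = I`, `U [I; A] = 0`, `U [I; M] = A - M`. Thus
`G(T) = (A - M) e^{TM}`, the first term equals `e^{(s-t)M} Θ`, the jump term equals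
`e^{(s-t)M} Θ - e^{(s-t)A} Θ`, and `e^{τM} Θ = Θ e^{-τAᵀ}`.
-/

open Matrix NormedSpace
open scoped Nat

namespace Matrix

variable {m n : Type*} [Fintype m] [DecidableEq m] [Fintype n] [DecidableEq n]

theorem exp_mul_eq_mul_exp_of_mul_eq {F : Matrix m m ℝ} {M : Matrix n n ℝ} {V : Matrix m n ℝ}
    (h : F * V = V * M) : exp F * V = V * exp M := by
  have hpow (k : ℕ) : F ^ k * V = V * M ^ k := by
    induction k with
    | zero => simp
    | succ k ih => rw [pow_succ, Matrix.mul_assoc, h, ← Matrix.mul_assoc, ih, Matrix.mul_assoc,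
        ← pow_succ]
  have hF : HasSum (fun k : ℕ => ((k !⁻¹ : ℝ) • F ^ k) * V) (exp F * V) :=
    open scoped Norms.Operator in
    (mulRightLinearMap m ℝ V).toContinuousLinearMap.hasSum (exp_series_hasSum_exp' F)
  have hM : HasSum (fun k : ℕ => V * ((k !⁻¹ : ℝ) • M ^ k)) (V * exp M) :=
    open scoped Norms.Operator in
    (mulLeftLinearMap n ℝ V).toContinuousLinearMap.hasSum (exp_series_hasSum_exp' M)
  refine hF.unique ?_
  simpa only [Matrix.smul_mul, Matrix.mul_smul, hpow] using hM

theorem exp_smul_mul_eq_mul_exp_smul_of_mul_eq {F : Matrix m m ℝ} {M : Matrix n n ℝ}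
    {V : Matrix m n ℝ} (h : F * V = V * M) (τ : ℝ) : exp (τ • F) * V = V * exp (τ • M) :=
  exp_mul_eq_mul_exp_of_mul_eq <| by rw [Matrix.smul_mul, h, Matrix.mul_smul]

theorem exp_smul_mul_exp_smul (X : Matrix m m ℝ) (a b : ℝ) :
    exp (a • X) * exp (b • X) = exp ((a + b) • X) := by
  rw [add_smul, exp_add_of_commute _ _ ((Commute.refl X).smul_left a |>.smul_right b)]

theorem inv_mul_exp_smul (K X : Matrix m m ℝ) (T : ℝ) :
    (K * exp (T • X))⁻¹ = exp ((-T) • X) * K⁻¹ := by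
  rw [mul_inv_rev, ← exp_neg, neg_smul]

theorem fromBlocks_zero_one_mul_fromRows_one {B D X : Matrix m m ℝ} (hX : X * X = B + D * X) :
    fromBlocks 0 1 B D * fromRows (1 : Matrix m m ℝ) X = fromRows (1 : Matrix m m ℝ) X * X := by
  simp [fromBlocks_mul_fromRows, fromRows_mul, hX]

end Matrix

section GreenFunction

variable {m k : Type*} [Fintype m] [DecidableEq m] {F : Matrix (m ⊕ m) (m ⊕ m) ℝ}
  {X₁ X₂ : Matrix m m ℝ}

theorem mul_exp_smul_mul_fromRows_zero_sub_mul
    (h₁ : F * fromRows (1 : Matrix m m ℝ) X₁ = fromRows (1 : Matrix m m ℝ) X₁ * X₁)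
    (h₂ : F * fromRows (1 : Matrix m m ℝ) X₂ = fromRows (1 : Matrix m m ℝ) X₂ * X₂)
    {l : Type*} (R : Matrix l (m ⊕ m) ℝ) (C : Matrix m k ℝ) (τ : ℝ) :
    R * exp (τ • F) * fromRows (0 : Matrix m k ℝ) ((X₂ - X₁) * C) =
      R * fromRows (1 : Matrix m m ℝ) X₂ * exp (τ • X₂) * C -
        R * fromRows (1 : Matrix m m ℝ) X₁ * exp (τ • X₁) * C := by
  have hsplit : fromRows (0 : Matrix m k ℝ) ((X₂ - X₁) * C) =
      fromRows (1 : Matrix m m ℝ) X₂ * C - fromRows (1 : Matrix m m ℝ) X₁ * C := by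
    ext (i | i) j <;> simp [fromRows_mul, Matrix.sub_mul]
  rw [hsplit, Matrix.mul_assoc, Matrix.mul_sub, ← Matrix.mul_assoc _ (fromRows _ X₂),
    ← Matrix.mul_assoc _ (fromRows _ X₁), exp_smul_mul_eq_mul_exp_smul_of_mul_eq h₁,
    exp_smul_mul_eq_mul_exp_smul_of_mul_eq h₂]
  simp only [Matrix.mul_assoc, Matrix.mul_sub]

theorem fromCols_one_zero_mul_exp_smul_mul_fromRows_zero_sub_mul
    (h₁ : F * fromRows (1 : Matrix m m ℝ) X₁ = fromRows (1 : Matrix m m ℝ) X₁ * X₁)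
    (h₂ : F * fromRows (1 : Matrix m m ℝ) X₂ = fromRows (1 : Matrix m m ℝ) X₂ * X₂)
    (C : Matrix m k ℝ) (τ : ℝ) :
    (fromCols 1 0 : Matrix m (m ⊕ m) ℝ) * exp (τ • F) *
        fromRows (0 : Matrix m k ℝ) ((X₂ - X₁) * C) =
      exp (τ • X₂) * C - exp (τ • X₁) * C := by
  simp [mul_exp_smul_mul_fromRows_zero_sub_mul h₁ h₂, fromCols_mul_fromRows]

theorem fromCols_neg_one_mul_exp_smul_mul_fromRows_zero_sub_mul
    (h₁ : F * fromRows (1 : Matrix m m ℝ) X₁ = fromRows (1 : Matrix m m ℝ) X₁ * X₁)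
    (h₂ : F * fromRows (1 : Matrix m m ℝ) X₂ = fromRows (1 : Matrix m m ℝ) X₂ * X₂)
    (C : Matrix m k ℝ) (τ : ℝ) :
    (fromCols X₁ (-1) : Matrix m (m ⊕ m) ℝ) * exp (τ • F) *
        fromRows (0 : Matrix m k ℝ) ((X₂ - X₁) * C) =
      (X₁ - X₂) * exp (τ • X₂) * C := by
  simp [mul_exp_smul_mul_fromRows_zero_sub_mul h₁ h₂, fromCols_mul_fromRows, ← sub_eq_add_neg]

theorem fromCols_neg_one_mul_exp_smul_mul_fromRows_one
    (h₂ : F * fromRows (1 : Matrix m m ℝ) X₂ = fromRows (1 : Matrix m m ℝ) X₂ * X₂) (τ : ℝ) :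
    (fromCols X₁ (-1) : Matrix m (m ⊕ m) ℝ) * exp (τ • F) * fromRows (1 : Matrix m m ℝ) X₂ =
      (X₁ - X₂) * exp (τ • X₂) := by
  simp [Matrix.mul_assoc, exp_smul_mul_eq_mul_exp_smul_of_mul_eq h₂, fromCols_mul_fromRows,
    Matrix.sub_mul, ← sub_eq_add_neg]

theorem fromCols_one_zero_mul_green_mul_fromRows_zero_sub_mul
    (h₁ : F * fromRows (1 : Matrix m m ℝ) X₁ = fromRows (1 : Matrix m m ℝ) X₁ * X₁)
    (h₂ : F * fromRows (1 : Matrix m m ℝ) X₂ = fromRows (1 : Matrix m m ℝ) X₂ * X₂)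
    (hK : IsUnit (X₁ - X₂)) (C : Matrix m k ℝ) (T s t : ℝ) :
    (fromCols 1 0 : Matrix m (m ⊕ m) ℝ) *
        (exp (s • F) * fromRows (1 : Matrix m m ℝ) X₂ *
          ((fromCols X₁ (-1) : Matrix m (m ⊕ m) ℝ) * exp (T • F) *
            fromRows (1 : Matrix m m ℝ) X₂)⁻¹ *
          ((fromCols X₁ (-1) : Matrix m (m ⊕ m) ℝ) * exp ((T - t) • F))) *
        fromRows (0 : Matrix m k ℝ) ((X₂ - X₁) * C) =
      exp ((s - t) • X₂) * C := by
  have hleft : (fromCols 1 0 : Matrix m (m ⊕ m) ℝ) *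
      (exp (s • F) * fromRows (1 : Matrix m m ℝ) X₂) = exp (s • X₂) := by
    simp [exp_smul_mul_eq_mul_exp_smul_of_mul_eq h₂, fromCols_mul_fromRows]
  calc _ = (fromCols 1 0 : Matrix m (m ⊕ m) ℝ) * (exp (s • F) * fromRows (1 : Matrix m m ℝ) X₂) *
          ((fromCols X₁ (-1) : Matrix m (m ⊕ m) ℝ) * exp (T • F) *
            fromRows (1 : Matrix m m ℝ) X₂)⁻¹ *
          ((fromCols X₁ (-1) : Matrix m (m ⊕ m) ℝ) * exp ((T - t) • F) *
            fromRows (0 : Matrix m k ℝ) ((X₂ - X₁) * C)) := by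
        simp only [Matrix.mul_assoc]
    _ = exp (s • X₂) * (exp ((-T) • X₂) * (X₁ - X₂)⁻¹) *
          ((X₁ - X₂) * exp ((T - t) • X₂) * C) := by
        rw [hleft, fromCols_neg_one_mul_exp_smul_mul_fromRows_one h₂, inv_mul_exp_smul,
          fromCols_neg_one_mul_exp_smul_mul_fromRows_zero_sub_mul h₁ h₂]
    _ = exp ((s - t) • X₂) * C := by
        rw [Matrix.mul_assoc, Matrix.mul_assoc, ← Matrix.mul_assoc (X₁ - X₂)⁻¹,
          ← Matrix.mul_assoc (X₁ - X₂)⁻¹, nonsing_inv_mul _ ((isUnit_iff_isUnit_det _).mp hK),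
          Matrix.one_mul, ← Matrix.mul_assoc, ← Matrix.mul_assoc, exp_smul_mul_exp_smul,
          exp_smul_mul_exp_smul, show s + -T + (T - t) = s - t by ring]

theorem fromCols_one_zero_mul_green_sub_jump_mul_fromRows_zero_sub_mul
    (h₁ : F * fromRows (1 : Matrix m m ℝ) X₁ = fromRows (1 : Matrix m m ℝ) X₁ * X₁)
    (h₂ : F * fromRows (1 : Matrix m m ℝ) X₂ = fromRows (1 : Matrix m m ℝ) X₂ * X₂)
    (hK : IsUnit (X₁ - X₂)) (C : Matrix m k ℝ) (T s t : ℝ) :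
    (fromCols 1 0 : Matrix m (m ⊕ m) ℝ) *
        (exp (s • F) * fromRows (1 : Matrix m m ℝ) X₂ *
          ((fromCols X₁ (-1) : Matrix m (m ⊕ m) ℝ) * exp (T • F) *
            fromRows (1 : Matrix m m ℝ) X₂)⁻¹ *
          ((fromCols X₁ (-1) : Matrix m (m ⊕ m) ℝ) * exp ((T - t) • F)) -
          (if t ≤ s then (1 : ℝ) else 0) • exp ((s - t) • F)) *
        fromRows (0 : Matrix m k ℝ) ((X₂ - X₁) * C) =
      if t ≤ s then exp ((s - t) • X₁) * C else exp ((s - t) • X₂) * C := by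
  rw [Matrix.mul_sub, Matrix.sub_mul,
    fromCols_one_zero_mul_green_mul_fromRows_zero_sub_mul h₁ h₂ hK, Matrix.mul_smul,
    Matrix.smul_mul, fromCols_one_zero_mul_exp_smul_mul_fromRows_zero_sub_mul h₁ h₂]
  split_ifs <;> simp

end GreenFunction

section PhysicalRealizability

variable {m : Type*} [Fintype m] [DecidableEq m] {A Θ ℧ : Matrix m m ℝ}

theorem neg_conj_transpose_sub_eq_mul_inv (hΘ : IsUnit Θ) (h℧ : ℧ = -(A * Θ + Θ * Aᵀ)) :
    -(Θ * Aᵀ * Θ⁻¹) - A = ℧ * Θ⁻¹ := by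
  rw [h℧, neg_mul, Matrix.add_mul,
    mul_nonsing_inv_cancel_right _ _ ((isUnit_iff_isUnit_det Θ).mp hΘ)]
  abel

theorem neg_conj_transpose_mul_self_eq (hΘ : IsUnit Θ) (h℧ : ℧ = -(A * Θ + Θ * Aᵀ))
    (h℧inv : IsUnit ℧) :
    -(Θ * Aᵀ * Θ⁻¹) * -(Θ * Aᵀ * Θ⁻¹) =
      ℧ * Aᵀ * ℧⁻¹ * A + (A - ℧ * Aᵀ * ℧⁻¹) * -(Θ * Aᵀ * Θ⁻¹) := by
  set M := -(Θ * Aᵀ * Θ⁻¹)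
  rw [← sub_eq_zero]
  calc M * M - (℧ * Aᵀ * ℧⁻¹ * A + (A - ℧ * Aᵀ * ℧⁻¹) * M)
      = (M - A) * M + ℧ * Aᵀ * ℧⁻¹ * (M - A) := by noncomm_ring
    _ = ℧ * (Aᵀ * Θ⁻¹ - Θ⁻¹ * (Θ * (Aᵀ * Θ⁻¹))) := by
        rw [neg_conj_transpose_sub_eq_mul_inv hΘ h℧, Matrix.mul_assoc (℧ * Aᵀ),
          nonsing_inv_mul_cancel_left _ _ ((isUnit_iff_isUnit_det ℧).mp h℧inv)]
        simp only [M]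
        noncomm_ring
    _ = 0 := by
        rw [nonsing_inv_mul_cancel_left _ _ ((isUnit_iff_isUnit_det Θ).mp hΘ),
          sub_self, Matrix.mul_zero]

theorem exp_smul_neg_conj_mul (hΘ : IsUnit Θ) (X : Matrix m m ℝ) (τ : ℝ) :
    exp (τ • -(Θ * X * Θ⁻¹)) * Θ = Θ * exp ((-τ) • X) :=
  exp_mul_eq_mul_exp_of_mul_eq <| by
    rw [smul_neg, ← neg_smul, Matrix.smul_mul, Matrix.mul_smul,
      nonsing_inv_mul_cancel_right _ _ ((isUnit_iff_isUnit_det Θ).mp hΘ)]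

end PhysicalRealizability

theorem stmt7_general
    (n : ℕ) (T : ℝ)
    (A Θ : Matrix (Fin n) (Fin n) ℝ)
    (hΘinv : IsUnit Θ)
    (℧ : Matrix (Fin n) (Fin n) ℝ)
    (h℧ : ℧ = -(A * Θ + Θ * Aᵀ)) (h℧inv : IsUnit ℧)
    (Λ : ℝ → Matrix (Fin n) (Fin n) ℝ)
    (hΛ : ∀ τ : ℝ, Λ τ = if 0 ≤ τ then NormedSpace.exp (τ • A) * Θ else Θ * NormedSpace.exp ((-τ) • Aᵀ))
    (F : Matrix (Fin n ⊕ Fin n) (Fin n ⊕ Fin n) ℝ)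
    (hF : F = Matrix.fromBlocks 0 1 (℧ * Aᵀ * ℧⁻¹ * A) (A - ℧ * Aᵀ * ℧⁻¹))
    (U : Matrix (Fin n) (Fin n ⊕ Fin n) ℝ)
    (hU : U = Matrix.fromCols A (-1))
    (V : Matrix (Fin n ⊕ Fin n) (Fin n) ℝ)
    (hV : V = Matrix.fromRows 1 (-(Θ * Aᵀ * Θ⁻¹)))
    (G : Matrix (Fin n) (Fin n) ℝ)
    (hG : G = U * NormedSpace.exp (T • F) * V) :
    ∀ s ∈ Set.Icc (0:ℝ) T, ∀ t ∈ Set.Icc (0:ℝ) T,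
      Λ (s - t) =
        (Matrix.fromCols 1 0 : Matrix (Fin n) (Fin n ⊕ Fin n) ℝ) *
          (NormedSpace.exp (s • F) * V * G⁻¹ * (U * NormedSpace.exp ((T - t) • F))
            - (if t ≤ s then (1:ℝ) else 0) • NormedSpace.exp ((s - t) • F)) *
          (Matrix.fromRows 0 ℧ : Matrix (Fin n ⊕ Fin n) (Fin n) ℝ) := by
  intro s _ t _
  set M := -(Θ * Aᵀ * Θ⁻¹)
  have hMA := neg_conj_transpose_sub_eq_mul_inv hΘinv h℧
  have hAM : IsUnit (A - M) := by
    rw [← neg_sub, hMA]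
    exact (h℧inv.mul (isUnit_nonsing_inv_iff.mpr hΘinv)).neg
  have h℧K : fromRows (0 : Matrix (Fin n) (Fin n) ℝ) ℧ = fromRows 0 ((M - A) * Θ) := by
    rw [hMA, nonsing_inv_mul_cancel_right _ _ ((isUnit_iff_isUnit_det Θ).mp hΘinv)]
  have hA : F * fromRows (1 : Matrix (Fin n) (Fin n) ℝ) A = fromRows 1 A * A :=
    hF ▸ fromBlocks_zero_one_mul_fromRows_one (by noncomm_ring)
  have hM : F * fromRows (1 : Matrix (Fin n) (Fin n) ℝ) M = fromRows 1 M * M :=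
    hF ▸ fromBlocks_zero_one_mul_fromRows_one (neg_conj_transpose_mul_self_eq hΘinv h℧ h℧inv)
  rw [hG, hU, hV, h℧K,
    fromCols_one_zero_mul_green_sub_jump_mul_fromRows_zero_sub_mul hA hM hAM, hΛ]
  simp only [sub_nonneg]
  split_ifs
  · rfl
  · rw [exp_smul_neg_conj_mul hΘinv, neg_sub]

/-- Green-function representation of the commutator kernel: for all
`s, t ∈ [0,T]`,
`Λ(s-t) = [I 0] (e^{sF} V G(T)⁻¹ U e^{(T-t)F} - χ_{[0,s]}(t) e^{(s-t)F}) [0; ℧]`,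
where `G(T) = U e^{TF} V`. -/
theorem stmt7
    (n : ℕ) (T : ℝ) (hT : 0 < T)
    (A Θ : Matrix (Fin n) (Fin n) ℝ)
    (hΘskew : Θᵀ = -Θ) (hΘinv : IsUnit Θ)
    (℧ : Matrix (Fin n) (Fin n) ℝ)
    (h℧ : ℧ = -(A * Θ + Θ * Aᵀ)) (h℧inv : IsUnit ℧)
    (Λ : ℝ → Matrix (Fin n) (Fin n) ℝ)
    (hΛ : ∀ τ : ℝ, Λ τ = if 0 ≤ τ then NormedSpace.exp (τ • A) * Θ else Θ * NormedSpace.exp ((-τ) • Aᵀ))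
    (F : Matrix (Fin n ⊕ Fin n) (Fin n ⊕ Fin n) ℝ)
    (hF : F = Matrix.fromBlocks 0 1 (℧ * Aᵀ * ℧⁻¹ * A) (A - ℧ * Aᵀ * ℧⁻¹))
    (U : Matrix (Fin n) (Fin n ⊕ Fin n) ℝ)
    (hU : U = Matrix.fromCols A (-1))
    (V : Matrix (Fin n ⊕ Fin n) (Fin n) ℝ)
    (hV : V = Matrix.fromRows 1 (-(Θ * Aᵀ * Θ⁻¹)))
    (G : Matrix (Fin n) (Fin n) ℝ)
    (hG : G = U * NormedSpace.exp (T • F) * V) :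
    ∀ s ∈ Set.Icc (0:ℝ) T, ∀ t ∈ Set.Icc (0:ℝ) T,
      Λ (s - t) =
        (Matrix.fromCols 1 0 : Matrix (Fin n) (Fin n ⊕ Fin n) ℝ) *
          (NormedSpace.exp (s • F) * V * G⁻¹ * (U * NormedSpace.exp ((T - t) • F))
            - (if t ≤ s then (1:ℝ) else 0) • NormedSpace.exp ((s - t) • F)) *
          (Matrix.fromRows 0 ℧ : Matrix (Fin n ⊕ Fin n) (Fin n) ℝ) :=
  stmt7_general n T A Θ hΘinv ℧ h℧ h℧inv Λ hΛ F hF U hU V hV G hG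
end

section
/- If g : [0,T] → ℂⁿ is twice continuously differentiable, satisfies the homogeneous ODE g''(s) + (℧Aᵀ℧⁻¹ − A)g'(s) − ℧Aᵀ℧⁻¹A g(s) = 0 for all s ∈ [0,T], and satisfies the boundary conditions g'(0) = −ΘAᵀΘ⁻¹ g(0) and g'(T) = A g(T), then g is identically zero on [0,T]. -/
/-!
The operator in the ODE factors as `(d/ds + Q) (d/ds - P)` with `P = A` and `Q = ℧Aᵀ℧⁻¹`, so
`h := g' - A g` solves the first-order linear equation `h' = -Q h`. The boundary condition at `T`
says `h T = 0`, hence `h ≡ 0` and `g' = A g`. The boundary condition at `0` then gives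
`(A + ΘAᵀΘ⁻¹) g 0 = 0`, and `(A + ΘAᵀΘ⁻¹) Θ = AΘ + ΘAᵀ = -℧` is invertible, so `g 0 = 0` and
uniqueness for `g' = A g` forces `g ≡ 0`.
-/

open Matrix Set

section LinearODE

variable {E : Type*} [NormedAddCommGroup E] [NormedSpace ℝ E] (L : E →L[ℝ] E) {f : ℝ → E}
  {a b : ℝ}

theorem linear_ODE_eqOn_zero_of_left_eq_zero
    (hf : ∀ t ∈ Icc a b, HasDerivWithinAt f (L (f t)) (Icc a b) t) (ha : f a = 0) :
    EqOn f 0 (Icc a b) :=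
  ODE_solution_unique_of_mem_Icc_right (v := fun _ ↦ L) (s := fun _ ↦ univ) (g := 0)
    (fun _ _ ↦ L.lipschitz.lipschitzOnWith) (fun t ht ↦ (hf t ht).continuousWithinAt)
    (fun t ht ↦ (hf t (Ico_subset_Icc_self ht)).mono_of_mem_nhdsWithin
      (Icc_mem_nhdsGE_of_mem ht))
    (fun _ _ ↦ mem_univ _) continuousOn_const
    (fun t _ ↦ (hasDerivWithinAt_zero t _).congr_deriv L.map_zero.symm)
    (fun _ _ ↦ mem_univ _) ha

theorem linear_ODE_eqOn_zero_of_right_eq_zero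
    (hf : ∀ t ∈ Icc a b, HasDerivWithinAt f (L (f t)) (Icc a b) t) (hb : f b = 0) :
    EqOn f 0 (Icc a b) :=
  ODE_solution_unique_of_mem_Icc_left (v := fun _ ↦ L) (s := fun _ ↦ univ) (g := 0)
    (fun _ _ ↦ L.lipschitz.lipschitzOnWith) (fun t ht ↦ (hf t ht).continuousWithinAt)
    (fun t ht ↦ (hf t (Ioc_subset_Icc_self ht)).mono_of_mem_nhdsWithin
      (Icc_mem_nhdsLE_of_mem ht))
    (fun _ _ ↦ mem_univ _) continuousOn_const
    (fun t _ ↦ (hasDerivWithinAt_zero t _).congr_deriv L.map_zero.symm)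
    (fun _ _ ↦ mem_univ _) hb

end LinearODE

namespace Matrix

variable {𝕜 ι : Type*} [RCLike 𝕜] [Fintype ι]

theorem linear_ODE_eqOn_zero_of_left_eq_zero (M : Matrix ι ι 𝕜) {f : ℝ → ι → 𝕜} {a b : ℝ}
    (hf : ∀ t ∈ Icc a b, HasDerivWithinAt f (M *ᵥ f t) (Icc a b) t) (ha : f a = 0) :
    EqOn f 0 (Icc a b) :=
  _root_.linear_ODE_eqOn_zero_of_left_eq_zero
    (M.mulVecLin.toContinuousLinearMap.restrictScalars ℝ) hf ha

theorem linear_ODE_eqOn_zero_of_right_eq_zero (M : Matrix ι ι 𝕜) {f : ℝ → ι → 𝕜} {a b : ℝ}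
    (hf : ∀ t ∈ Icc a b, HasDerivWithinAt f (M *ᵥ f t) (Icc a b) t) (hb : f b = 0) :
    EqOn f 0 (Icc a b) :=
  _root_.linear_ODE_eqOn_zero_of_right_eq_zero
    (M.mulVecLin.toContinuousLinearMap.restrictScalars ℝ) hf hb

theorem hasDerivWithinAt_mulVec (M : Matrix ι ι 𝕜) {f : ℝ → ι → 𝕜} {f' : ι → 𝕜}
    {s : Set ℝ} {t : ℝ} (hf : HasDerivWithinAt f f' s t) :
    HasDerivWithinAt (fun x ↦ M *ᵥ f x) (M *ᵥ f') s t :=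
  (M.mulVecLin.toContinuousLinearMap.restrictScalars ℝ).hasFDerivAt.comp_hasDerivWithinAt t hf

theorem eqOn_zero_of_factored_second_order_bvp [DecidableEq ι] (P Q R : Matrix ι ι 𝕜)
    (hPR : IsUnit (P + R)) {g g' g'' : ℝ → ι → 𝕜} {a b : ℝ}
    (hg' : ∀ s ∈ Icc a b, HasDerivWithinAt g (g' s) (Icc a b) s)
    (hg'' : ∀ s ∈ Icc a b, HasDerivWithinAt g' (g'' s) (Icc a b) s)
    (hODE : ∀ s ∈ Icc a b, g'' s + (Q - P) *ᵥ g' s - (Q * P) *ᵥ g s = 0)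
    (ha : g' a = -R *ᵥ g a) (hb : g' b = P *ᵥ g b) :
    EqOn g 0 (Icc a b) := by
  intro x hx
  let h s := g' s - P *ᵥ g s
  have hh : ∀ s ∈ Icc a b, HasDerivWithinAt h (-Q *ᵥ h s) (Icc a b) s := fun s hs ↦ by
    refine ((hg'' s hs).sub (P.hasDerivWithinAt_mulVec (hg' s hs))).congr_deriv ?_
    rw [← sub_eq_zero, ← hODE s hs]
    simp only [h, neg_mulVec, mulVec_sub, sub_mulVec, ← mulVec_mulVec]
    abel
  have h_zero : EqOn h 0 (Icc a b) :=
    linear_ODE_eqOn_zero_of_right_eq_zero _ hh (by simp [h, hb])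
  have hgP : ∀ s ∈ Icc a b, HasDerivWithinAt g (P *ᵥ g s) (Icc a b) s := fun s hs ↦
    (hg' s hs).congr_deriv (sub_eq_zero.mp (h_zero hs))
  have hga : g a = 0 := by
    refine mulVec_injective_iff_isUnit.mpr hPR ?_
    calc (P + R) *ᵥ g a = -h a := by simp only [h, ha, add_mulVec, neg_mulVec]; abel
      _ = (P + R) *ᵥ 0 := by rw [h_zero (left_mem_Icc.mpr (hx.1.trans hx.2))]; simp
  exact linear_ODE_eqOn_zero_of_left_eq_zero P hgP hga hx

theorem isUnit_add_mul_mul_inv {R n : Type*} [CommRing R] [Fintype n] [DecidableEq n]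
    {A B Θ : Matrix n n R} (hΘ : IsUnit Θ) (h : IsUnit (A * Θ + Θ * B)) :
    IsUnit (A + Θ * B * Θ⁻¹) := by
  have hΘ_inv : (A + Θ * B * Θ⁻¹) * Θ = A * Θ + Θ * B := by
    rw [add_mul, mul_assoc _ Θ⁻¹, nonsing_inv_mul _ ((isUnit_iff_isUnit_det Θ).mp hΘ), mul_one]
  exact (IsUnit.mul_right_iff hΘ).mp (hΘ_inv ▸ h)

end Matrix

theorem stmt8_general
    (n : ℕ) (T : ℝ)
    (A Θ : Matrix (Fin n) (Fin n) ℝ)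
    (hΘinv : IsUnit Θ)
    (℧ : Matrix (Fin n) (Fin n) ℝ)
    (h℧ : ℧ = -(A * Θ + Θ * Aᵀ)) (h℧inv : IsUnit ℧)
    (g g' g'' : ℝ → Fin n → ℂ)
    (hg' : ∀ s ∈ Set.Icc (0:ℝ) T, HasDerivWithinAt g (g' s) (Set.Icc 0 T) s)
    (hg'' : ∀ s ∈ Set.Icc (0:ℝ) T, HasDerivWithinAt g' (g'' s) (Set.Icc 0 T) s)
    (hODE : ∀ s ∈ Set.Icc (0:ℝ) T,
      g'' s + ((℧ * Aᵀ * ℧⁻¹ - A).map (Complex.ofReal)) *ᵥ g' s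
        - ((℧ * Aᵀ * ℧⁻¹ * A).map (Complex.ofReal)) *ᵥ g s = 0)
    (hbc0 : g' 0 = (-(Θ * Aᵀ * Θ⁻¹)).map (Complex.ofReal) *ᵥ g 0)
    (hbcT : g' T = (A.map (Complex.ofReal)) *ᵥ g T) :
    ∀ s ∈ Set.Icc (0:ℝ) T, g s = 0 := by
  let φ := Complex.ofRealHom.mapMatrix (m := Fin n)
  have hφ (M : Matrix (Fin n) (Fin n) ℝ) : M.map Complex.ofReal = φ M := rfl
  have hN : IsUnit (A + Θ * Aᵀ * Θ⁻¹) := by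
    refine isUnit_add_mul_mul_inv hΘinv ?_
    rw [← neg_neg (A * Θ + Θ * Aᵀ), ← h℧]
    exact h℧inv.neg
  simp only [hφ, map_sub φ (℧ * Aᵀ * ℧⁻¹) A, map_mul φ (℧ * Aᵀ * ℧⁻¹) A, map_neg]
    at hODE hbc0 hbcT
  exact eqOn_zero_of_factored_second_order_bvp (φ A) (φ (℧ * Aᵀ * ℧⁻¹)) (φ (Θ * Aᵀ * Θ⁻¹))
    (map_add φ _ _ ▸ hN.map φ) hg' hg'' hODE hbc0 hbcT

/-- With `Θ` antisymmetric invertible and `℧ := -(AΘ + ΘAᵀ)` invertible,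
any twice continuously differentiable solution `g : [0,T] → ℂⁿ` of the homogeneous ODE
`g'' + (℧Aᵀ℧⁻¹ - A)g' - ℧Aᵀ℧⁻¹A g = 0` with boundary conditions `g'(0) = -ΘAᵀΘ⁻¹ g(0)`
and `g'(T) = A g(T)` vanishes identically on `[0,T]`. -/
theorem stmt8
    (n : ℕ) (T : ℝ) (hT : 0 < T)
    (A Θ : Matrix (Fin n) (Fin n) ℝ)
    (hΘskew : Θᵀ = -Θ) (hΘinv : IsUnit Θ)
    (℧ : Matrix (Fin n) (Fin n) ℝ)
    (h℧ : ℧ = -(A * Θ + Θ * Aᵀ)) (h℧inv : IsUnit ℧)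
    (g g' g'' : ℝ → Fin n → ℂ)
    (hg' : ∀ s ∈ Set.Icc (0:ℝ) T, HasDerivWithinAt g (g' s) (Set.Icc 0 T) s)
    (hg'' : ∀ s ∈ Set.Icc (0:ℝ) T, HasDerivWithinAt g' (g'' s) (Set.Icc 0 T) s)
    (hcont : ContinuousOn g'' (Set.Icc 0 T))
    (hODE : ∀ s ∈ Set.Icc (0:ℝ) T,
      g'' s + ((℧ * Aᵀ * ℧⁻¹ - A).map (Complex.ofReal)) *ᵥ g' s
        - ((℧ * Aᵀ * ℧⁻¹ * A).map (Complex.ofReal)) *ᵥ g s = 0)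
    (hbc0 : g' 0 = (-(Θ * Aᵀ * Θ⁻¹)).map (Complex.ofReal) *ᵥ g 0)
    (hbcT : g' T = (A.map (Complex.ofReal)) *ᵥ g T) :
    ∀ s ∈ Set.Icc (0:ℝ) T, g s = 0 :=
  stmt8_general n T A Θ hΘinv ℧ h℧ h℧inv g g' g'' hg' hg'' hODE hbc0 hbcT
end

section
/- Let f, h ∈ L²([0,T],ℂⁿ) satisfy 𝓛f = iω f and 𝓛h = iμ h with ω, μ real. If ω ≠ μ, then ⟨f, h⟩ := ∫₀ᵀ f(t)* h(t) dt = 0. If moreover ω > 0 and μ > 0, then ⟨f̄, h⟩ = ∫₀ᵀ f(t)ᵀ h(t) dt = 0, where f̄ is the entrywise complex conjugate of f. -/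
/-!
The kernel satisfies `Λ(τ)ᵀ = -Λ(-τ)`, so by Fubini the bilinear pairing `B(g, h) = ∫ gᵀ h`
satisfies `B(g, 𝓛h) = -B(𝓛g, h)`; for eigenfunctions `𝓛g = c g`, `𝓛h = d h` this forces
`(c + d) B(g, h) = 0`. Since `Λ` is real, `f̄` is an eigenfunction for `-iω`: taking `g = f̄`
gives `i(μ - ω) ⟨f, h⟩ = 0`, and taking `g = f` gives `i(ω + μ) B(f, h) = 0`.
-/

open MeasureTheory Matrix Set NormedSpace

section IntegralMatrix

variable {α β : Type*} [MeasurableSpace α] [MeasurableSpace β] {m n 𝕜 : Type*}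
  [Fintype m] [Fintype n] [RCLike 𝕜]

theorem dotProduct_integral {μ : Measure α} (c : n → 𝕜) {v : α → n → 𝕜} (hv : Integrable v μ) :
    c ⬝ᵥ ∫ x, v x ∂μ = ∫ x, c ⬝ᵥ v x ∂μ := by
  simp only [dotProduct, eval_integral hv.eval]
  rw [integral_finsetSum _ fun i _ => (hv.eval i).const_mul (c i)]
  simp only [integral_const_mul]

theorem integral_dotProduct {μ : Measure α} {v : α → n → 𝕜} (hv : Integrable v μ) (c : n → 𝕜) :
    (∫ x, v x ∂μ) ⬝ᵥ c = ∫ x, v x ⬝ᵥ c ∂μ := by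
  simp only [dotProduct_comm _ c, dotProduct_integral c hv]

theorem MeasureTheory.Integrable.matrix_mulVec {μ : Measure α} {M : α → Matrix m n 𝕜} {C : ℝ}
    (hM : ∀ i j, AEStronglyMeasurable (fun x => M x i j) μ)
    (hMC : ∀ᵐ x ∂μ, ∀ i j, ‖M x i j‖ ≤ C) {v : α → n → 𝕜} (hv : Integrable v μ) :
    Integrable (fun x => M x *ᵥ v x) μ :=
  Integrable.of_eval fun i => integrable_finsetSum _ fun j _ =>
    (hv.eval j).bdd_mul (hM i j) (hMC.mono fun _ hx => hx i j)

variable {μ : Measure α} {ν : Measure β} {K : α → β → Matrix m n 𝕜} {C : ℝ}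

theorem integrable_dotProduct_mulVec_prod
    (hK : ∀ i j, AEStronglyMeasurable (fun p : α × β => K p.1 p.2 i j) (μ.prod ν))
    (hKC : ∀ᵐ p ∂μ.prod ν, ∀ i j, ‖K p.1 p.2 i j‖ ≤ C)
    {g : α → m → 𝕜} {h : β → n → 𝕜} (hg : Integrable g μ) (hh : Integrable h ν) :
    Integrable (fun p : α × β => g p.1 ⬝ᵥ (K p.1 p.2 *ᵥ h p.2)) (μ.prod ν) := by
  have hexp : (fun p : α × β => g p.1 ⬝ᵥ (K p.1 p.2 *ᵥ h p.2)) =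
      fun p => ∑ i, ∑ j, K p.1 p.2 i j * (g p.1 i * h p.2 j) := by
    ext p
    simp only [dotProduct, mulVec, Finset.mul_sum]
    exact Finset.sum_congr rfl fun _ _ => Finset.sum_congr rfl fun _ _ => by ring
  rw [hexp]
  exact integrable_finsetSum _ fun i _ => integrable_finsetSum _ fun j _ =>
    ((hg.eval i).mul_prod (hh.eval j)).bdd_mul (hK i j) (hKC.mono fun _ hp => hp i j)

theorem integral_dotProduct_integral_mulVec_swap [IsFiniteMeasure μ] [IsFiniteMeasure ν]
    (hK : ∀ i j, AEStronglyMeasurable (fun p : α × β => K p.1 p.2 i j) (μ.prod ν))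
    (hKC : ∀ᵐ p ∂μ.prod ν, ∀ i j, ‖K p.1 p.2 i j‖ ≤ C)
    {g : α → m → 𝕜} {h : β → n → 𝕜} (hg : Integrable g μ) (hh : Integrable h ν) :
    ∫ s, g s ⬝ᵥ ∫ t, K s t *ᵥ h t ∂ν ∂μ = ∫ t, (∫ s, (K s t)ᵀ *ᵥ g s ∂μ) ⬝ᵥ h t ∂ν := by
  have hKh : Integrable (fun p : α × β => K p.1 p.2 *ᵥ h p.2) (μ.prod ν) :=
    (hh.comp_snd μ).matrix_mulVec hK hKC
  have hKg : Integrable (fun p : α × β => (K p.1 p.2)ᵀ *ᵥ g p.1) (μ.prod ν) :=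
    (hg.comp_fst ν).matrix_mulVec (fun i j => hK j i) (hKC.mono fun _ hp i j => hp j i)
  calc ∫ s, g s ⬝ᵥ ∫ t, K s t *ᵥ h t ∂ν ∂μ
      = ∫ s, ∫ t, g s ⬝ᵥ (K s t *ᵥ h t) ∂ν ∂μ :=
        integral_congr_ae (hKh.prod_right_ae.mono fun s hs => dotProduct_integral _ hs)
    _ = ∫ t, ∫ s, g s ⬝ᵥ (K s t *ᵥ h t) ∂μ ∂ν :=
        integral_integral_swap (integrable_dotProduct_mulVec_prod hK hKC hg hh)
    _ = ∫ t, ∫ s, ((K s t)ᵀ *ᵥ g s) ⬝ᵥ h t ∂μ ∂ν := by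
        simp only [dotProduct_mulVec, mulVec_transpose]
    _ = ∫ t, (∫ s, (K s t)ᵀ *ᵥ g s ∂μ) ⬝ᵥ h t ∂ν :=
        integral_congr_ae (hKg.prod_left_ae.mono fun t ht => (integral_dotProduct ht _).symm)

end IntegralMatrix

section KernelOperator

variable {n : Type*} [Fintype n]

/-- The operator `𝓛` of the statement, on `[a, b]` and for a kernel `Λ = k`. -/
noncomputable def kernelOperator (k : ℝ → Matrix n n ℝ) (a b : ℝ) (f : ℝ → n → ℂ) (s : ℝ) :
    n → ℂ :=
  ∫ t in Icc a b, (k (s - t)).map Complex.ofReal *ᵥ f t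

variable {k : ℝ → Matrix n n ℝ} {a b : ℝ}

theorem kernelOperator_star (f : ℝ → n → ℂ) (s : ℝ) :
    kernelOperator k a b (fun t => star (f t)) s = star (kernelOperator k a b f s) := by
  have hreal : ∀ (M : Matrix n n ℝ) (v : n → ℂ),
      M.map Complex.ofReal *ᵥ star v = star (M.map Complex.ofReal *ᵥ v) := by
    intro M v
    ext i
    simp [mulVec, dotProduct]
  simp only [kernelOperator, hreal]
  exact (starL' ℝ).integral_comp_comm _

theorem exists_ae_norm_kernel_sub_le (hk : Continuous k) :
    ∃ C, ∀ᵐ p ∂(volume.restrict (Icc a b)).prod (volume.restrict (Icc a b)),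
      ∀ i j, ‖(k (p.1 - p.2)).map Complex.ofReal i j‖ ≤ C := by
  obtain ⟨C, hC⟩ := (isCompact_Icc (a := a - b) (b := b - a)).exists_bound_of_continuousOn
    (f := fun τ => (of.symm (k τ) : n → n → ℝ)) hk.continuousOn
  refine ⟨C, ?_⟩
  rw [Measure.prod_restrict]
  filter_upwards [ae_restrict_mem (measurableSet_Icc.prod measurableSet_Icc)] with p hp i j
  have hdiff : p.1 - p.2 ∈ Icc (a - b) (b - a) := by
    obtain ⟨⟨hs₁, hs₂⟩, ht₁, ht₂⟩ := hp
    constructor <;> linarith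
  calc ‖(k (p.1 - p.2)).map Complex.ofReal i j‖ = ‖of.symm (k (p.1 - p.2)) i j‖ :=
        Complex.norm_real _
    _ ≤ ‖of.symm (k (p.1 - p.2))‖ := (norm_le_pi_norm _ j).trans (norm_le_pi_norm _ i)
    _ ≤ C := hC _ hdiff

theorem integral_dotProduct_kernelOperator (hk : Continuous k) (hkT : ∀ τ, (k τ)ᵀ = -k (-τ))
    {g h : ℝ → n → ℂ} (hg : Integrable g (volume.restrict (Icc a b)))
    (hh : Integrable h (volume.restrict (Icc a b))) :
    ∫ s in Icc a b, g s ⬝ᵥ kernelOperator k a b h s =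
      -∫ t in Icc a b, kernelOperator k a b g t ⬝ᵥ h t := by
  obtain ⟨C, hC⟩ := exists_ae_norm_kernel_sub_le (a := a) (b := b) hk
  have hmeas : ∀ i j,
      AEStronglyMeasurable (fun p : ℝ × ℝ => (k (p.1 - p.2)).map Complex.ofReal i j)
        ((volume.restrict (Icc a b)).prod (volume.restrict (Icc a b))) := fun i j =>
    (Complex.continuous_ofReal.comp
      ((hk.matrix_elem i j).comp (continuous_fst.sub continuous_snd))).aestronglyMeasurable
  have hKT : ∀ s t, ((k (s - t)).map Complex.ofReal)ᵀ = -(k (t - s)).map Complex.ofReal := by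
    intro s t
    rw [← transpose_map, hkT, neg_sub, Matrix.map_neg _ Complex.ofReal_neg]
  simp only [kernelOperator]
  rw [integral_dotProduct_integral_mulVec_swap hmeas hC hg hh, ← integral_neg]
  simp only [hKT, neg_mulVec, integral_neg, neg_dotProduct]

theorem mul_integral_dotProduct_eq_zero (hk : Continuous k) (hkT : ∀ τ, (k τ)ᵀ = -k (-τ))
    {g h : ℝ → n → ℂ} (hg : Integrable g (volume.restrict (Icc a b)))
    (hh : Integrable h (volume.restrict (Icc a b))) {c d : ℂ}
    (hgc : ∀ᵐ s ∂volume.restrict (Icc a b), kernelOperator k a b g s = c • g s)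
    (hhd : ∀ᵐ s ∂volume.restrict (Icc a b), kernelOperator k a b h s = d • h s) :
    (c + d) * ∫ s in Icc a b, g s ⬝ᵥ h s = 0 := by
  have hleft : ∫ s in Icc a b, g s ⬝ᵥ kernelOperator k a b h s =
      d * ∫ s in Icc a b, g s ⬝ᵥ h s := by
    rw [← integral_const_mul]
    exact integral_congr_ae (hhd.mono fun s hs => by simp only [hs, dotProduct_smul, smul_eq_mul])
  have hright : ∫ s in Icc a b, kernelOperator k a b g s ⬝ᵥ h s =
      c * ∫ s in Icc a b, g s ⬝ᵥ h s := by
    rw [← integral_const_mul]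
    exact integral_congr_ae (hgc.mono fun s hs => by simp only [hs, smul_dotProduct, smul_eq_mul])
  have hsym := integral_dotProduct_kernelOperator hk hkT hg hh
  rw [hleft, hright] at hsym
  linear_combination hsym

end KernelOperator

section ExpKernel

variable {n : Type*} [Fintype n] [DecidableEq n]

noncomputable def expKernel (A Θ : Matrix n n ℝ) (τ : ℝ) : Matrix n n ℝ :=
  if 0 ≤ τ then exp (τ • A) * Θ else Θ * exp ((-τ) • Aᵀ)

attribute [local instance] Matrix.linftyOpNormedRing Matrix.linftyOpNormedAlgebra in
theorem continuous_expKernel (A Θ : Matrix n n ℝ) : Continuous (expKernel A Θ) :=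
  Continuous.if_le
    ((exp_continuous.comp (continuous_id.smul continuous_const)).mul continuous_const)
    (continuous_const.mul (exp_continuous.comp (continuous_neg.smul continuous_const)))
    continuous_const continuous_id fun τ hτ => by simp [← hτ]

theorem transpose_expKernel {A Θ : Matrix n n ℝ} (hΘ : Θᵀ = -Θ) (τ : ℝ) :
    (expKernel A Θ τ)ᵀ = -expKernel A Θ (-τ) := by
  rcases lt_trichotomy τ 0 with hτ | rfl | hτ
  · rw [expKernel, expKernel, if_neg hτ.not_ge, if_pos (neg_nonneg.2 hτ.le), transpose_mul,
      ← exp_transpose, transpose_smul, transpose_transpose, hΘ, mul_neg]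
  · simp [expKernel, hΘ]
  · rw [expKernel, expKernel, if_pos hτ.le, if_neg (by linarith), neg_neg, transpose_mul,
      ← exp_transpose, transpose_smul, hΘ, neg_mul]

end ExpKernel

/-- Let `f, h ∈ L²([0,T],ℂⁿ)` satisfy `𝓛f = iω f` and `𝓛h = iμ h` with
`ω, μ` real. If `ω ≠ μ` then `⟨f,h⟩ = ∫₀ᵀ f(t)* h(t) dt = 0`; if moreover `ω > 0` and
`μ > 0`, then also `⟨f̄,h⟩ = ∫₀ᵀ f(t)ᵀ h(t) dt = 0`. -/
theorem stmt13
    (n : ℕ) (T : ℝ) (hT : 0 < T)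
    (A Θ : Matrix (Fin n) (Fin n) ℝ)
    (hΘskew : Θᵀ = -Θ)
    (Λ : ℝ → Matrix (Fin n) (Fin n) ℝ)
    (hΛ : ∀ τ : ℝ, Λ τ = if 0 ≤ τ then exp (τ • A) * Θ else Θ * exp ((-τ) • Aᵀ))
    (ω μ : ℝ)
    (f h : ℝ → Fin n → ℂ)
    (hf : MemLp f 2 (volume.restrict (Set.Icc 0 T)))
    (hh : MemLp h 2 (volume.restrict (Set.Icc 0 T)))
    (heigf : ∀ᵐ s ∂(volume.restrict (Set.Icc (0:ℝ) T)),
      (∫ t in (0:ℝ)..T, ((Λ (s - t)).map (Complex.ofReal)) *ᵥ f t)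
        = (Complex.I * ω) • f s)
    (heigh : ∀ᵐ s ∂(volume.restrict (Set.Icc (0:ℝ) T)),
      (∫ t in (0:ℝ)..T, ((Λ (s - t)).map (Complex.ofReal)) *ᵥ h t)
        = (Complex.I * μ) • h s)
    (hωμ : ω ≠ μ) :
    (∫ t in (0:ℝ)..T, star (f t) ⬝ᵥ h t) = 0 ∧
    (0 < ω → 0 < μ → (∫ t in (0:ℝ)..T, f t ⬝ᵥ h t) = 0) := by
  obtain rfl : Λ = expKernel A Θ := funext hΛ
  simp only [intervalIntegral.integral_of_le hT.le, ← integral_Icc_eq_integral_Ioc]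
    at heigf heigh ⊢
  have hfi := hf.integrable one_le_two
  have hhi := hh.integrable one_le_two
  have hk := continuous_expKernel A Θ
  have hkT := transpose_expKernel (A := A) hΘskew
  constructor
  · have hconj : ∀ᵐ s ∂volume.restrict (Icc 0 T),
        kernelOperator (expKernel A Θ) 0 T (fun t => star (f t)) s =
          star (Complex.I * ω) • star (f s) :=
      heigf.mono fun s hs => by rw [kernelOperator_star, ← star_smul]; exact congrArg star hs
    have hfi_star := (starL' ℝ).toContinuousLinearMap.integrable_comp hfi
    refine (mul_eq_zero.1
      (mul_integral_dotProduct_eq_zero hk hkT hfi_star hhi hconj heigh)).resolve_left ?_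
    simpa [Complex.ext_iff, neg_add_eq_zero] using hωμ
  · intro hω hμ
    refine (mul_eq_zero.1
      (mul_integral_dotProduct_eq_zero hk hkT hfi hhi heigf heigh)).resolve_left ?_
    simpa [Complex.ext_iff] using (add_pos hω hμ).ne'
end
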